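/- arXiv:2303.05573 — 9 statements merged into one kernel-verified Lean document; each statement's English description precedes it below -/
import Mathlib

section
/- Let J be a nonzero ideal of the polynomial ring K[x_1,...,x_k] over a field K of characteristic zero. Then there exists a finite system of generators f_1,...,f_l of J such that the ideal generated by f_1,...,f_{l-1}, x_1 f_l, x_2 f_l, ..., x_k f_l is strictly contained in J. -/
/-!
Let `m = (x_1, …, x_k)`. Since `J ≠ 0` and `m ≠ (1)`, Nakayama's lemma in the domain
`K[x_1, …, x_k]` gives `m J ≠ J`. Take a smallest finite set generating `J` modulo `m J`, single out
one of its elements `f_l`, and let `N` be generated by the others together with `m J`. By minimality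
`N < J`, while `N + (f_l) = J`; so any generators `f_1, …, f_{l-1}` of `N` work, because
`x_j f_l ∈ m J ⊆ N`.
-/

open MvPolynomial

namespace Ideal

variable {R : Type*} [CommRing R]

theorem mul_ne_self_of_ne_top [IsDomain R] {I J : Ideal R} (hJ : J.FG) (hJ₀ : J ≠ ⊥)
    (hI : I ≠ ⊤) : I * J ≠ J := by
  intro hIJ
  obtain ⟨r, hrI, hr⟩ :=
    Submodule.exists_mem_and_smul_eq_self_of_fg_of_le_smul I J hJ (by rw [smul_eq_mul, hIJ])
  obtain ⟨y, hyJ, hy₀⟩ := Submodule.ne_bot_iff J |>.1 hJ₀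
  have hr₁ : r = 1 := mul_right_cancel₀ hy₀ <| (hr y hyJ).trans (one_mul y).symm
  exact hI <| I.eq_top_of_isUnit_mem hrI (hr₁ ▸ isUnit_one)

theorem exists_lt_sup_span_singleton_eq [IsNoetherianRing R] {I J : Ideal R} (hIJ : I * J ≠ J) :
    ∃ N : Ideal R, ∃ p ∈ J, I * J ≤ N ∧ N < J ∧ N ⊔ span {p} = J := by
  classical
  let S : Set (Finset R) := {s | span ↑s ⊔ I * J = J}
  obtain ⟨t, ht⟩ := IsNoetherian.noetherian J
  have htS : t ∈ S := by
    change span ↑t ⊔ I * J = J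
    rw [show span (t : Set R) = J from ht, sup_eq_left]
    exact mul_le_right
  obtain ⟨s, hs, hmin⟩ := (measure Finset.card).wf.has_min S ⟨t, htS⟩
  obtain ⟨p, hp⟩ : s.Nonempty := by
    rw [Finset.nonempty_iff_ne_empty]
    rintro rfl
    exact hIJ (by simpa [S] using hs)
  have hsJ : span (s : Set R) ≤ J := hs ▸ le_sup_left
  refine ⟨span ↑(s.erase p) ⊔ I * J, p, hsJ (subset_span hp), le_sup_right,
    lt_of_le_of_ne (sup_le ((span_mono (s.erase_subset p)).trans hsJ) mul_le_right)
      fun h ↦ hmin _ h (Finset.card_erase_lt_of_mem hp), ?_⟩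
  rw [sup_right_comm, sup_comm (span _), ← span_insert, ← Finset.coe_insert,
    Finset.insert_erase hp, hs]

end Ideal

theorem MvPolynomial.span_range_X_ne_top (σ K : Type*) [CommRing K] [Nontrivial K] :
    Ideal.span (Set.range (X : σ → MvPolynomial σ K)) ≠ ⊤ := by
  refine ne_top_of_le_ne_top (RingHom.ker_ne_top (constantCoeff (σ := σ) (R := K))) ?_
  rw [Ideal.span_le]
  rintro _ ⟨j, rfl⟩
  exact constantCoeff_X K j

theorem stmt0_general (K : Type*) [Field K] (k : ℕ)
    (J : Ideal (MvPolynomial (Fin k) K)) (hJ : J ≠ ⊥) :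
    ∃ (l : ℕ) (f : Fin (l + 1) → MvPolynomial (Fin k) K),
      Ideal.span (Set.range f) = J ∧
      Ideal.span ((Set.range fun i : Fin l => f i.castSucc) ∪
          (Set.range fun j : Fin k => MvPolynomial.X j * f (Fin.last l))) < J := by
  obtain ⟨N, p, hpJ, hmN, hNJ, hNp⟩ := Ideal.exists_lt_sup_span_singleton_eq <|
    Ideal.mul_ne_self_of_ne_top (IsNoetherian.noetherian J) hJ (span_range_X_ne_top (Fin k) K)
  obtain ⟨l, g, hg⟩ := Submodule.fg_iff_exists_fin_generating_family.1 (IsNoetherian.noetherian N)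
  replace hg : Ideal.span (Set.range g) = N := hg
  refine ⟨l, Fin.snoc g p, ?_, ?_⟩
  · rw [Fin.range_snoc, Ideal.span_insert, hg, sup_comm, hNp]
  · simp only [Fin.snoc_castSucc, Fin.snoc_last]
    refine lt_of_le_of_lt (Ideal.span_le.2 ?_) hNJ
    rintro _ (⟨i, rfl⟩ | ⟨j, rfl⟩)
    · exact hg ▸ Ideal.subset_span ⟨i, rfl⟩
    · exact hmN (Ideal.mul_mem_mul (Ideal.subset_span ⟨j, rfl⟩) hpJ)

/-- For any nonzero ideal `J` of `K[x_1,...,x_k]`, there is a finite system of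
generators `f_1, ..., f_l` of `J` such that the ideal generated by
`f_1, ..., f_{l-1}, x_1 f_l, ..., x_k f_l` is strictly contained in `J`. -/
theorem stmt0 (K : Type*) [Field K] [CharZero K] (k : ℕ)
    (J : Ideal (MvPolynomial (Fin k) K)) (hJ : J ≠ ⊥) :
    ∃ (l : ℕ) (f : Fin (l + 1) → MvPolynomial (Fin k) K),
      Ideal.span (Set.range f) = J ∧
      Ideal.span ((Set.range fun i : Fin l => f i.castSucc) ∪
          (Set.range fun j : Fin k => MvPolynomial.X j * f (Fin.last l))) < J :=
  stmt0_general K k J hJ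
end

section
/- Let I ⊆ K[x_1,...,x_k] be an ideal with generators f_1,...,f_l, and let Ĩ = (f_1,...,f_{l-1}, x_1 f_l, ..., x_k f_l). If dim_K K[x_1,...,x_k]/I is finite and Ĩ is strictly contained in I, then dim_K K[x_1,...,x_k]/Ĩ = dim_K K[x_1,...,x_k]/I + 1. Moreover, the class of f_l in K[x_1,...,x_k]/Ĩ spans a one-dimensional ideal, and the quotient by this ideal is isomorphic to K[x_1,...,x_k]/I. -/
set_option synthInstance.maxHeartbeats 1000000
set_option maxHeartbeats 1000000

open MvPolynomial

/-- Let `I = (f_1,...,f_l)` be a finite-colength ideal of `K[x_1,...,x_k]` and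
`Ĩ = (f_1,...,f_{l-1}, x_1 f_l, ..., x_k f_l)`. If `Ĩ ⊊ I`, then
`dim K[x]/Ĩ = dim K[x]/I + 1`, the class of `f_l` in `K[x]/Ĩ` spans a one-dimensional
ideal, and the quotient by this ideal is isomorphic to `K[x]/I`. -/
theorem stmt4 (K : Type*) [Field K] (k l : ℕ)
    (f : Fin (l + 1) → MvPolynomial (Fin k) K)
    (I Itil : Ideal (MvPolynomial (Fin k) K))
    (hI : I = Ideal.span (Set.range f))
    (hItil : Itil = Ideal.span ((Set.range fun i : Fin l => f i.castSucc) ∪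
      (Set.range fun j : Fin k => X j * f (Fin.last l))))
    (hfin : FiniteDimensional K (MvPolynomial (Fin k) K ⧸ I))
    (hlt : Itil < I) :
    Module.finrank K (MvPolynomial (Fin k) K ⧸ Itil) =
        Module.finrank K (MvPolynomial (Fin k) K ⧸ I) + 1 ∧
      Module.finrank K
        ((Ideal.span {Ideal.Quotient.mk Itil (f (Fin.last l))}).restrictScalars K) = 1 ∧
      Submodule.span K {Ideal.Quotient.mk Itil (f (Fin.last l))} =
        (Ideal.span {Ideal.Quotient.mk Itil (f (Fin.last l))}).restrictScalars K ∧
      Nonempty (((MvPolynomial (Fin k) K ⧸ Itil) ⧸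
          Ideal.span {Ideal.Quotient.mk Itil (f (Fin.last l))}) ≃ₐ[K]
        (MvPolynomial (Fin k) K ⧸ I)) := by
  have hle : Itil ≤ I := hlt.le
  have hrange : Set.range f = (Set.range fun i : Fin l => f i.castSucc) ∪ {f (Fin.last l)} := by
    ext p
    constructor
    · rintro ⟨i, rfl⟩
      rcases Fin.eq_castSucc_or_eq_last i with ⟨j, rfl⟩ | rfl
      · exact Or.inl ⟨j, rfl⟩
      · exact Or.inr rfl
    · rintro (⟨j, rfl⟩ | hp)
      · exact ⟨j.castSucc, rfl⟩
      · exact ⟨Fin.last l, hp.symm⟩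
  have hBle : Ideal.span (Set.range fun j : Fin k => X j * f (Fin.last l)) ≤
      Ideal.span ({f (Fin.last l)} : Set (MvPolynomial (Fin k) K)) := by
    rw [Ideal.span_le]
    rintro p ⟨j, rfl⟩
    exact Ideal.mul_mem_left _ _ (Ideal.subset_span rfl)
  have hIsup : I = Itil ⊔ Ideal.span {f (Fin.last l)} := by
    rw [hI, hItil, hrange, Ideal.span_union, Ideal.span_union, sup_assoc,
      sup_eq_right.mpr hBle]
  have hgne : Ideal.Quotient.mk Itil (f (Fin.last l)) ≠ 0 := by
    rw [Ne, Ideal.Quotient.eq_zero_iff_mem]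
    intro hmem
    exact absurd (hIsup ▸ sup_le le_rfl ((Ideal.span_singleton_le_iff_mem _).mpr hmem))
      (not_le_of_gt hlt)
  have hkey : ∀ p : MvPolynomial (Fin k) K, ∃ c : K,
      Ideal.Quotient.mk Itil (p * f (Fin.last l)) =
      c • Ideal.Quotient.mk Itil (f (Fin.last l)) := by
    intro p
    induction p using MvPolynomial.induction_on with
    | C a =>
        refine ⟨a, ?_⟩
        rw [← MvPolynomial.smul_eq_C_mul, ← Ideal.Quotient.mkₐ_eq_mk K Itil]
        exact map_smul (Ideal.Quotient.mkₐ K Itil) a (f (Fin.last l))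
    | add p q hp hq =>
        obtain ⟨cp, hcp⟩ := hp
        obtain ⟨cq, hcq⟩ := hq
        exact ⟨cp + cq, by rw [add_mul, map_add, hcp, hcq, add_smul]⟩
    | mul_X p j hp =>
        refine ⟨0, ?_⟩
        have hm : X j * f (Fin.last l) ∈ Itil := hItil ▸ Ideal.subset_span (Or.inr ⟨j, rfl⟩)
        rw [mul_assoc, map_mul, Ideal.Quotient.eq_zero_iff_mem.mpr hm, mul_zero, zero_smul]
  have hspan : Submodule.span K {Ideal.Quotient.mk Itil (f (Fin.last l))} =
      (Ideal.span {Ideal.Quotient.mk Itil (f (Fin.last l))}).restrictScalars K := by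
    apply le_antisymm
    · rw [Submodule.span_le]
      rintro x rfl
      exact Ideal.subset_span rfl
    · rintro y hy
      obtain ⟨r, hr⟩ := Ideal.mem_span_singleton'.mp hy
      obtain ⟨p, rfl⟩ := Ideal.Quotient.mk_surjective r
      obtain ⟨c, hc⟩ := hkey p
      rw [← hr, ← map_mul, hc]
      exact Submodule.smul_mem _ _ (Submodule.mem_span_singleton_self _)
  have hfr1 : Module.finrank K
      ((Ideal.span {Ideal.Quotient.mk Itil (f (Fin.last l))}).restrictScalars K) = 1 := by
    rw [← hspan]
    exact finrank_span_singleton hgne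
  have hmapeq : ∀ M : Ideal (MvPolynomial (Fin k) K),
      Ideal.map (Ideal.Quotient.mkₐ K Itil) M = Ideal.map (Ideal.Quotient.mk Itil) M :=
    fun M => by simp only [Ideal.map, Ideal.Quotient.mkₐ_eq_mk]
  have hJmap : Ideal.span {Ideal.Quotient.mk Itil (f (Fin.last l))} =
      Ideal.map (Ideal.Quotient.mkₐ K Itil) I := by
    rw [hmapeq, hIsup, Ideal.map_sup, Ideal.map_span, Set.image_singleton,
      Ideal.map_quotient_self, bot_sup_eq]
  have e : ((MvPolynomial (Fin k) K ⧸ Itil) ⧸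
      Ideal.span {Ideal.Quotient.mk Itil (f (Fin.last l))}) ≃ₐ[K]
      MvPolynomial (Fin k) K ⧸ I :=
    (Ideal.quotientEquivAlgOfEq K hJmap).trans (DoubleQuot.quotQuotEquivQuotOfLEₐ K hle)
  have eq1 := Submodule.Quotient.restrictScalarsEquiv K
    (Ideal.span {Ideal.Quotient.mk Itil (f (Fin.last l))})
  have eqt := eq1.trans e.toLinearEquiv
  have hfq : FiniteDimensional K ((MvPolynomial (Fin k) K ⧸ Itil) ⧸
      (Ideal.span {Ideal.Quotient.mk Itil (f (Fin.last l))}).restrictScalars K) :=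
    Module.Finite.equiv eqt.symm
  have hfinItil : FiniteDimensional K (MvPolynomial (Fin k) K ⧸ Itil) := by
    refine ⟨Submodule.fg_of_fg_map_of_fg_inf_ker
      ((Ideal.span {Ideal.Quotient.mk Itil (f (Fin.last l))}).restrictScalars K).mkQ ?_ ?_⟩
    · rw [Submodule.map_top, Submodule.range_mkQ]
      exact Module.finite_def.mp hfq
    · rw [top_inf_eq, Submodule.ker_mkQ, ← hspan]
      exact Submodule.fg_span_singleton _
  have hmain : Module.finrank K (MvPolynomial (Fin k) K ⧸ Itil) =
      Module.finrank K (MvPolynomial (Fin k) K ⧸ I) + 1 := by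
    rw [← Submodule.finrank_quotient_add_finrank
      ((Ideal.span {Ideal.Quotient.mk Itil (f (Fin.last l))}).restrictScalars K),
      LinearEquiv.finrank_eq eqt, hfr1]
  exact ⟨hmain, hfr1, hspan, ⟨e⟩⟩
end

section
/- The K-algebras A_2 = K[x,y]/(x^2 y, x^4, x^3 - y^2) and Â_2 = K[x,y]/(xy, x^4, y^3) are not isomorphic as K-algebras. -/
/-!
In both algebras the nilradical `𝔫` is the image of `(x, y)`. In `A₂` we have `y ∉ 𝔫²` but
`y² = x³ ∈ 𝔫³`. In `Â₂` no element of `𝔫 \ 𝔫²` squares into `𝔫³`: modulo `𝔫³` the square of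
`a x + b y + …` is `a² x² + b² y²` because `xy = 0`, and the specialisations `y ↦ 0` and `x ↦ 0`
into `K[t]` see `a² t²` and `b² t²` there. This property is preserved by ring isomorphisms.
-/

open MvPolynomial

theorem Prime.sq_dvd_of_pow_three_dvd_sq {M : Type*} [CommMonoidWithZero M] [IsCancelMulZero M]
    {p q : M} (hp : Prime p) (h : p ^ 3 ∣ q ^ 2) : p ^ 2 ∣ q := by
  obtain ⟨s, rfl⟩ : p ∣ q := hp.dvd_of_dvd_pow (dvd_trans (dvd_pow_self p three_ne_zero) h)
  have hps : p ∣ s ^ 2 := by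
    rw [mul_pow, pow_succ] at h
    exact (mul_dvd_mul_iff_left (pow_ne_zero 2 hp.ne_zero)).mp h
  rw [sq]
  exact mul_dvd_mul_left p (hp.dvd_of_dvd_pow hps)

/-- The squaring map `𝔫/𝔫² → 𝔫²/𝔫³` on the nilradical `𝔫` has a nonzero isotropic vector. -/
def SqFormIsotropic (R : Type*) [CommRing R] : Prop :=
  ∃ v ∈ nilradical R, v ∉ nilradical R ^ 2 ∧ v ^ 2 ∈ nilradical R ^ 3

section SqFormIsotropic

variable {R S : Type*} [CommRing R] [CommRing S]

theorem RingEquiv.map_nilradical (e : R ≃+* S) : (nilradical R).map e = nilradical S := by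
  change Ideal.map (e : R →+* S) (nilradical R) = _
  rw [nilradical, nilradical, Ideal.map_radical_of_surjective e.surjective (by simp),
    Ideal.zero_eq_bot, Ideal.map_bot]
  rfl

theorem SqFormIsotropic.of_ringEquiv (e : R ≃+* S) (h : SqFormIsotropic R) : SqFormIsotropic S := by
  obtain ⟨v, hv, hv2, hv3⟩ := h
  have hpow (n : ℕ) : (nilradical R ^ n).map e = nilradical S ^ n := by
    rw [Ideal.map_pow, e.map_nilradical]
  refine ⟨e v, ?_, fun hmem => hv2 ?_, ?_⟩
  · exact e.map_nilradical ▸ Ideal.mem_map_of_mem e hv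
  · obtain ⟨w, hw, hwv⟩ := (Ideal.mem_map_of_equiv e _).mp (hpow 2 ▸ hmem)
    exact e.injective hwv ▸ hw
  · rw [← hpow, ← map_pow]
    exact Ideal.mem_map_of_mem e hv3

end SqFormIsotropic

theorem Ideal.nilradical_quotient {R : Type*} [CommRing R] (I : Ideal R) :
    nilradical (R ⧸ I) = I.radical.map (Ideal.Quotient.mk I) := by
  rw [Ideal.map_radical_of_surjective Ideal.Quotient.mk_surjective (by simp),
    Ideal.map_quotient_self]
  rfl

namespace MvPolynomial

variable {σ R : Type*} [CommRing R]

theorem X_mem_idealOfVars (i : σ) : (X i : MvPolynomial σ R) ∈ idealOfVars σ R :=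
  Ideal.subset_span ⟨i, rfl⟩

theorem ker_constantCoeff : RingHom.ker (constantCoeff (σ := σ) (R := R)) = idealOfVars σ R := by
  ext p
  rw [RingHom.mem_ker, ← pow_one (idealOfVars σ R), mem_pow_idealOfVars_iff']
  simp [Finsupp.degree_eq_zero_iff, constantCoeff_eq]

instance [IsDomain R] : (idealOfVars σ R).IsPrime :=
  ker_constantCoeff (σ := σ) (R := R) ▸ RingHom.ker_isPrime _

theorem radical_eq_idealOfVars [IsDomain R] {I : Ideal (MvPolynomial σ R)}
    (hI : I ≤ idealOfVars σ R) (hX : ∀ i, X i ∈ I.radical) : I.radical = idealOfVars σ R :=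
  le_antisymm ((Ideal.IsPrime.radical_le_iff inferInstance).mpr hI)
    (Ideal.span_le.mpr (Set.range_subset_iff.mpr hX))

theorem exists_sub_linear_mem_sq_idealOfVars [Fintype σ] {p : MvPolynomial σ R}
    (hp : p ∈ idealOfVars σ R) :
    ∃ c : σ → R, p - ∑ i, C (c i) * X i ∈ idealOfVars σ R ^ 2 := by
  obtain ⟨f, rfl⟩ := Ideal.mem_span_range_iff_exists_fun.mp hp
  refine ⟨fun i => constantCoeff (f i), ?_⟩
  rw [← Finset.sum_sub_distrib]
  refine Ideal.sum_mem _ fun i _ => ?_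
  rw [← sub_mul, sq]
  refine Ideal.mul_mem_mul ?_ (X_mem_idealOfVars i)
  rw [← ker_constantCoeff, RingHom.mem_ker]
  simp

variable [DecidableEq σ]

theorem X_pow_dvd_aeval_single_of_mem (i : σ) {n : ℕ} {q : MvPolynomial σ R}
    (hq : q ∈ idealOfVars σ R ^ n) :
    (Polynomial.X : Polynomial R) ^ n ∣ aeval (Pi.single i Polynomial.X) q := by
  have hM : idealOfVars σ R ≤
      (Ideal.span {Polynomial.X}).comap (aeval (Pi.single i (Polynomial.X : Polynomial R))) := by
    refine Ideal.span_le.mpr (Set.range_subset_iff.mpr fun j => ?_)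
    rw [SetLike.mem_coe, Ideal.mem_comap, aeval_X, Pi.single_apply]
    split_ifs
    exacts [Ideal.mem_span_singleton_self _, zero_mem _]
  have := (Ideal.pow_right_mono hM n).trans (Ideal.le_comap_pow _ n) hq
  rwa [Ideal.mem_comap, Ideal.span_singleton_pow, Ideal.mem_span_singleton] at this

theorem aeval_single_linear [Fintype σ] (i : σ) (c : σ → R) :
    aeval (Pi.single i (Polynomial.X : Polynomial R)) (∑ j, C (c j) * X j) =
      Polynomial.C (c i) * Polynomial.X := by
  simp [Pi.single_apply]

variable {K : Type*} [Field K] [Fintype σ]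

/-- Under `X i ↦ t`, `X j ↦ 0` the linear part of `p` becomes `c i • t`, and
`t³ ∣ (c i • t + O(t²))²` forces `c i = 0`. -/
theorem mem_sq_idealOfVars_of_sq_mem {I : Ideal (MvPolynomial σ K)}
    (hI : ∀ i, ∀ q ∈ I, (Polynomial.X : Polynomial K) ^ 3 ∣ aeval (Pi.single i Polynomial.X) q)
    {p : MvPolynomial σ K} (hp : p ∈ idealOfVars σ K) (hp2 : p ^ 2 ∈ idealOfVars σ K ^ 3 ⊔ I) :
    p ∈ idealOfVars σ K ^ 2 := by
  obtain ⟨c, hr⟩ := exists_sub_linear_mem_sq_idealOfVars hp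
  suffices hc : c = 0 by simpa [hc] using hr
  funext i
  set φ := aeval (R := K) (Pi.single i (Polynomial.X : Polynomial K))
  have hsq : Polynomial.X ^ 3 ∣ φ p ^ 2 := by
    obtain ⟨y, hy, z, hz, hyz⟩ := Submodule.mem_sup.mp hp2
    rw [← map_pow, ← hyz, map_add]
    exact dvd_add (X_pow_dvd_aeval_single_of_mem i hy) (hI i z hz)
  have hlin : Polynomial.X ^ 2 ∣ Polynomial.C (c i) * Polynomial.X := by
    have := dvd_sub (Polynomial.prime_X.sq_dvd_of_pow_three_dvd_sq hsq)
      (X_pow_dvd_aeval_single_of_mem i hr)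
    rwa [map_sub, sub_sub_cancel, aeval_single_linear] at this
  rwa [sq, mul_dvd_mul_iff_right Polynomial.X_ne_zero, Polynomial.X_dvd_iff,
    Polynomial.coeff_C_zero] at hlin

end MvPolynomial

section Algebras

variable (K : Type*) [Field K]

noncomputable abbrev idealA₂ : Ideal (MvPolynomial (Fin 2) K) :=
  Ideal.span {X 0 ^ 2 * X 1, X 0 ^ 4, X 0 ^ 3 - X 1 ^ 2}

noncomputable abbrev idealA₂Hat : Ideal (MvPolynomial (Fin 2) K) :=
  Ideal.span {X 0 * X 1, X 0 ^ 4, X 1 ^ 3}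

variable {K}

theorem nilradical_quotient_eq_map_idealOfVars {σ : Type*} {I : Ideal (MvPolynomial σ K)}
    (hI : I ≤ idealOfVars σ K) (hX : ∀ i, X i ∈ I.radical) :
    nilradical (MvPolynomial σ K ⧸ I) = (idealOfVars σ K).map (Ideal.Quotient.mk I) := by
  rw [Ideal.nilradical_quotient, radical_eq_idealOfVars hI hX]

theorem idealA₂_le_sq_idealOfVars : idealA₂ K ≤ idealOfVars (Fin 2) K ^ 2 := by
  have hX (i : Fin 2) {n : ℕ} (hn : 2 ≤ n) :
      (X i : MvPolynomial (Fin 2) K) ^ n ∈ idealOfVars _ _ ^ 2 :=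
    Ideal.pow_le_pow_right hn (Ideal.pow_mem_pow (X_mem_idealOfVars i) n)
  refine Ideal.span_le.mpr ?_
  rintro q (rfl | rfl | rfl)
  exacts [Ideal.mul_mem_right _ _ (hX 0 le_rfl), hX 0 (by norm_num),
    sub_mem (hX 0 (by norm_num)) (hX 1 le_rfl)]

theorem X_mem_radical_idealA₂ : ∀ i, X i ∈ (idealA₂ K).radical := by
  refine Fin.forall_fin_two.mpr ⟨⟨4, Ideal.subset_span (by simp)⟩, ⟨3, ?_⟩⟩
  rw [show (X 1 : MvPolynomial (Fin 2) K) ^ 3 = X 0 * (X 0 ^ 2 * X 1) - X 1 * (X 0 ^ 3 - X 1 ^ 2)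
    by ring]
  exact sub_mem (Ideal.mul_mem_left _ _ (Ideal.subset_span (by simp)))
    (Ideal.mul_mem_left _ _ (Ideal.subset_span (by simp)))

theorem X_one_not_mem_sq_idealOfVars :
    (X 1 : MvPolynomial (Fin 2) K) ∉ idealOfVars (Fin 2) K ^ 2 := by
  rw [mem_pow_idealOfVars_iff']
  exact fun h => one_ne_zero (α := K) (by simpa [coeff_X] using h (Finsupp.single 1 1) (by simp))

theorem sqFormIsotropic_A₂ : SqFormIsotropic (MvPolynomial (Fin 2) K ⧸ idealA₂ K) := by
  have hI := idealA₂_le_sq_idealOfVars (K := K)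
  have hN := nilradical_quotient_eq_map_idealOfVars (hI.trans (Ideal.pow_le_self two_ne_zero))
    X_mem_radical_idealA₂
  refine ⟨Ideal.Quotient.mk _ (X 1), ?_, ?_, ?_⟩ <;> rw [hN]
  · exact Ideal.mem_map_of_mem _ (X_mem_idealOfVars 1)
  · rw [← Ideal.map_pow, Ideal.mem_quotient_iff_mem_sup, sup_eq_left.mpr hI]
    exact X_one_not_mem_sq_idealOfVars
  · have hyx : Ideal.Quotient.mk (idealA₂ K) (X 1 ^ 2) = Ideal.Quotient.mk _ (X 0 ^ 3) := by
      rw [Ideal.Quotient.eq, ← neg_mem_iff, neg_sub]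
      exact Ideal.subset_span (by simp)
    rw [← map_pow, hyx, ← Ideal.map_pow]
    exact Ideal.mem_map_of_mem _ (Ideal.pow_mem_pow (X_mem_idealOfVars 0) 3)

theorem idealA₂Hat_le_idealOfVars : idealA₂Hat K ≤ idealOfVars (Fin 2) K := by
  refine Ideal.span_le.mpr ?_
  rintro q (rfl | rfl | rfl)
  exacts [Ideal.mul_mem_right _ _ (X_mem_idealOfVars 0),
    Ideal.pow_mem_of_mem _ (X_mem_idealOfVars 0) 4 (by norm_num),
    Ideal.pow_mem_of_mem _ (X_mem_idealOfVars 1) 3 (by norm_num)]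

theorem X_mem_radical_idealA₂Hat : ∀ i, X i ∈ (idealA₂Hat K).radical :=
  Fin.forall_fin_two.mpr ⟨⟨4, Ideal.subset_span (by simp)⟩, ⟨3, Ideal.subset_span (by simp)⟩⟩

theorem X_pow_three_dvd_aeval_single_of_mem_idealA₂Hat (i : Fin 2) {q : MvPolynomial (Fin 2) K}
    (hq : q ∈ idealA₂Hat K) :
    (Polynomial.X : Polynomial K) ^ 3 ∣ aeval (Pi.single i Polynomial.X) q := by
  suffices idealA₂Hat K ≤
      (Ideal.span {Polynomial.X ^ 3}).comap (aeval (Pi.single i (Polynomial.X : Polynomial K))) by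
    simpa [Ideal.mem_span_singleton] using this hq
  refine Ideal.span_le.mpr ?_
  fin_cases i <;> rintro q (rfl | rfl | rfl) <;>
    simp [Ideal.mem_span_singleton, pow_dvd_pow]

theorem not_sqFormIsotropic_A₂Hat : ¬ SqFormIsotropic (MvPolynomial (Fin 2) K ⧸ idealA₂Hat K) := by
  rintro ⟨v, hv, hv2, hv3⟩
  rw [nilradical_quotient_eq_map_idealOfVars idealA₂Hat_le_idealOfVars X_mem_radical_idealA₂Hat]
    at hv hv2 hv3
  obtain ⟨p, hp, rfl⟩ := (Ideal.mem_map_iff_of_surjective _ Ideal.Quotient.mk_surjective).mp hv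
  rw [← Ideal.map_pow, ← map_pow, Ideal.mem_quotient_iff_mem_sup] at hv3
  rw [← Ideal.map_pow] at hv2
  exact hv2 (Ideal.mem_map_of_mem _
    (mem_sq_idealOfVars_of_sq_mem X_pow_three_dvd_aeval_single_of_mem_idealA₂Hat hp hv3))

end Algebras

theorem stmt5_general (K : Type*) [Field K] :
    IsEmpty
      ((MvPolynomial (Fin 2) K ⧸
          (Ideal.span {X 0 ^ 2 * X 1, X 0 ^ 4, X 0 ^ 3 - X 1 ^ 2} :
            Ideal (MvPolynomial (Fin 2) K))) ≃ₐ[K]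
        (MvPolynomial (Fin 2) K ⧸
          (Ideal.span {X 0 * X 1, X 0 ^ 4, X 1 ^ 3} : Ideal (MvPolynomial (Fin 2) K)))) :=
  ⟨fun e => not_sqFormIsotropic_A₂Hat (sqFormIsotropic_A₂.of_ringEquiv e.toRingEquiv)⟩

/-- The algebras `A_2 = K[x,y]/(x^2 y, x^4, x^3 - y^2)` and
`Â_2 = K[x,y]/(xy, x^4, y^3)` are not isomorphic as `K`-algebras. -/
theorem stmt5 (K : Type*) [Field K] [CharZero K] :
    IsEmpty
      ((MvPolynomial (Fin 2) K ⧸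
          (Ideal.span {X 0 ^ 2 * X 1, X 0 ^ 4, X 0 ^ 3 - X 1 ^ 2} :
            Ideal (MvPolynomial (Fin 2) K))) ≃ₐ[K]
        (MvPolynomial (Fin 2) K ⧸
          (Ideal.span {X 0 * X 1, X 0 ^ 4, X 1 ^ 3} : Ideal (MvPolynomial (Fin 2) K)))) :=
  stmt5_general K
end

section
/- With A_{n,k} as defined (n - 2k ≥ 2, k ≥ 1), the socle of A_{n,k} equals the one-dimensional span of S_{2k+1}^{n-2k}, and moreover m^{n-2k} = ⟨S_{2k+1}^{n-2k}⟩ where m is the maximal ideal; hence A_{n,k} is a Gorenstein local algebra of dimension n+1 whose socle equals m^{n-2k}. -/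
/-!
With `d = n - 2k`, write `s = S_{2k+1}` and pair `S_{2l+1}` with `S_{2l+2}`. The relations say
that the product of two of the first `2k` variables is `s^d` for a pair and `0` otherwise, and
that `S_i s = 0` for `i ≤ 2k`; hence `s^{d+1} = S_1 S_2 s = 0`. So the `2k` paired variables and
`1, s, …, s^d` span `A` (their span is stable under multiplication by every variable).

The crux is `s^d ≠ 0`. The functional "coefficient of `s^d` plus the coefficients of the pair
products" (Macaulay's dual generator of `A`) vanishes on `p * g` for every monomial `p` and every
defining relation `g`, hence on the whole ideal, but not on `s^d`.

If a combination of the spanning family is killed by `s`, only its powers of `s` contribute, so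
all coefficients of `s^i` with `i < d` vanish; multiplying then by the partner of a paired
variable isolates that variable's coefficient times `s^d`. This gives both linear independence
(so `dim A = 2k + d + 1 = n + 1`) and the socle. Since `d ≥ 2`, `m^2 ⊆ (s^2)` and then
`m^d ⊆ (s^d)`, which lies in the socle. Finally `m` is generated by nilpotents and `A/m = K`,
so `A` is local.
-/

open MvPolynomial

namespace MvPolynomial

variable {σ R : Type*} [CommSemiring R]

noncomputable def coeffSum (F : Finset (σ →₀ ℕ)) : MvPolynomial σ R →ₗ[R] R :=
  ∑ w ∈ F, lcoeff R w

theorem coeffSum_monomial [DecidableEq σ] (F : Finset (σ →₀ ℕ)) (u : σ →₀ ℕ) (c : R) :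
    coeffSum F (monomial u c) = if u ∈ F then c else 0 := by
  simp [coeffSum, coeff_monomial]

theorem coeffSum_eq_zero_of_mem_span {F : Finset (σ →₀ ℕ)} {S : Set (MvPolynomial σ R)}
    (hS : ∀ g ∈ S, ∀ u c, coeffSum F (monomial u c * g) = 0) {p : MvPolynomial σ R}
    (hp : p ∈ Ideal.span S) : coeffSum F p = 0 := by
  let J : Ideal (MvPolynomial σ R) :=
    { carrier := {p | ∀ r, coeffSum F (r * p) = 0}
      add_mem' := fun ha hb r => by simp only [mul_add, map_add, ha r, hb r, add_zero]
      zero_mem' := fun r => by simp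
      smul_mem' := fun a p hp r => by simpa only [smul_eq_mul, ← mul_assoc] using hp (r * a) }
  have hSJ : Ideal.span S ≤ J := Ideal.span_le.2 fun g hg r => by
    induction r using MvPolynomial.induction_on' with
    | monomial u c => exact hS g hg u c
    | add p q hp hq => simp only [add_mul, map_add, hp, hq, add_zero]
  simpa using hSJ hp 1

theorem idealOfVars_eq_ker_constantCoeff :
    idealOfVars σ R = RingHom.ker (constantCoeff : MvPolynomial σ R →+* R) := by
  ext p
  rw [← pow_one (idealOfVars σ R), mem_pow_idealOfVars_iff', RingHom.mem_ker, constantCoeff_eq]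
  simp [Finsupp.degree_eq_zero_iff]

theorem isMaximal_idealOfVars {K : Type*} [Field K] : (idealOfVars σ K).IsMaximal := by
  rw [idealOfVars_eq_ker_constantCoeff]
  exact RingHom.ker_isMaximal_of_surjective _ fun c => ⟨C c, constantCoeff_C _ c⟩

end MvPolynomial

theorem coeff_eq_zero_of_sum_smul_pow_mul_eq_zero {K A : Type*} [Field K] [Ring A]
    [Algebra K A] {x : A} {d : ℕ} (hd : x ^ d ≠ 0) (hd' : x ^ (d + 1) = 0)
    {c : Fin (d + 1) → K} (h : (∑ i, c i • x ^ (i : ℕ)) * x = 0) {i : Fin (d + 1)}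
    (hi : i ≠ Fin.last d) : c i = 0 := by
  obtain ⟨m, hm⟩ := i
  have hmd : m < d := Fin.val_lt_last hi
  induction m using Nat.strong_induction_on with
  | _ m ih =>
    have hterm : ∀ j : Fin (d + 1), c j • x ^ (j : ℕ) * x * x ^ (d - 1 - m) =
        if j = ⟨m, hm⟩ then c j • x ^ d else 0 := by
      intro j
      rw [smul_mul_assoc, smul_mul_assoc, ← pow_succ, ← pow_add]
      split_ifs with hj
      · rw [hj, show m + 1 + (d - 1 - m) = d by omega]
      · have hj' : (j : ℕ) ≠ m := fun h => hj (Fin.ext h)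
        rcases lt_or_gt_of_ne hj' with hlt | hgt
        · have hjd : (j : ℕ) < d := by omega
          rw [ih j hlt j.2 (Fin.ne_of_val_ne (by simp only [Fin.val_last]; omega)) hjd, zero_smul]
        · rw [pow_eq_zero_of_le (by omega) hd', smul_zero]
    have h' := congrArg (· * x ^ (d - 1 - m)) h
    simp only [Finset.sum_mul, hterm, zero_mul, Finset.sum_ite_eq', Finset.mem_univ,
      if_true] at h'
    exact (smul_eq_zero.1 h').resolve_right hd

namespace Ank

variable (K : Type*) [Field K] (k d : ℕ)

/-- Generators of the defining ideal of the paper's `A_{2k+d,k}`; its variable `S_{i+1}` is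
`X i`, so `S_{2k+1}` is `X (Fin.last (2 * k))`. -/
def relations : Set (MvPolynomial (Fin (2 * k + 1)) K) :=
  {p | ∃ i j : Fin (2 * k + 1), i ≤ j ∧
      ¬((∃ l, l < k ∧ (i : ℕ) = 2 * l ∧ (j : ℕ) = 2 * l + 1) ∨
        ((i : ℕ) = 2 * k ∧ (j : ℕ) = 2 * k)) ∧
      p = X i * X j} ∪
  {p | ∃ l, ∃ _ : l < k,
      p = X (⟨2 * l, by omega⟩ : Fin (2 * k + 1)) * X (⟨2 * l + 1, by omega⟩ : Fin (2 * k + 1)) -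
        X (Fin.last (2 * k)) ^ d}

abbrev A := MvPolynomial (Fin (2 * k + 1)) K ⧸ Ideal.span (relations K k d)

noncomputable def x (i : Fin (2 * k + 1)) : A K k d := Ideal.Quotient.mk _ (X i)

noncomputable def s : A K k d := x K k d (Fin.last (2 * k))

noncomputable def maxIdeal : Ideal (A K k d) := Ideal.span (Set.range (x K k d))

variable {k} in
def idx : Fin k ⊕ Fin k → Fin (2 * k + 1)
  | .inl l => ⟨2 * l, by omega⟩
  | .inr l => ⟨2 * l + 1, by omega⟩

noncomputable def y (a : Fin k ⊕ Fin k) : A K k d := x K k d (idx a)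

variable {K k d}

theorem idx_lt (a : Fin k ⊕ Fin k) : (idx a : ℕ) < 2 * k := by
  rcases a with l | l <;> simp only [idx] <;> omega

variable (K d) in
theorem x_eq_s_or_exists_y (i : Fin (2 * k + 1)) :
    x K k d i = s K k d ∨ ∃ a, x K k d i = y K k d a := by
  by_cases hi : (i : ℕ) = 2 * k
  · exact Or.inl (congrArg (x K k d) (Fin.ext hi))
  refine Or.inr ?_
  rcases Nat.even_or_odd i with ⟨m, hm⟩ | ⟨m, hm⟩
  · exact ⟨.inl ⟨m, by omega⟩, congrArg (x K k d) (Fin.ext (by simp only [idx]; omega))⟩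
  · exact ⟨.inr ⟨m, by omega⟩, congrArg (x K k d) (Fin.ext (by simp only [idx]; omega))⟩

theorem x_mul_x_eq_zero {i j : Fin (2 * k + 1)} (hij : i ≤ j)
    (hpair : ∀ l, (i : ℕ) = 2 * l → (j : ℕ) ≠ 2 * l + 1) (hi : (i : ℕ) ≠ 2 * k) :
    x K k d i * x K k d j = 0 := by
  rw [x, x, ← map_mul, Ideal.Quotient.eq_zero_iff_mem]
  refine Ideal.subset_span (Or.inl ⟨i, j, hij, ?_, rfl⟩)
  rintro (⟨l, -, hil, hjl⟩ | ⟨hik, -⟩)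
  exacts [hpair l hil hjl, hi hik]

theorem y_inl_mul_y_inr (l : Fin k) : y K k d (.inl l) * y K k d (.inr l) = s K k d ^ d := by
  rw [y, y, x, x, s, x, ← map_mul, ← map_pow, ← sub_eq_zero, ← map_sub,
    Ideal.Quotient.eq_zero_iff_mem]
  exact Ideal.subset_span (Or.inr ⟨l, l.2, rfl⟩)

theorem y_mul_y (a b : Fin k ⊕ Fin k) :
    y K k d a * y K k d b = if b = a.swap then s K k d ^ d else 0 := by
  split_ifs with h
  · subst h
    rcases a with l | l
    · exact y_inl_mul_y_inr l
    · rw [mul_comm]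
      exact y_inl_mul_y_inr l
  have key : ∀ a b, b ≠ Sum.swap a → idx a ≤ idx b → y K k d a * y K k d b = 0 := by
    intro a b hab hle
    refine x_mul_x_eq_zero hle (fun l hi hj => hab ?_) (idx_lt a).ne
    rcases a with l₁ | l₁ <;> rcases b with l₂ | l₂ <;>
      simp only [idx, Sum.swap_inl, Sum.swap_inr, Sum.inl.injEq, Sum.inr.injEq, reduceCtorEq,
        Fin.ext_iff] at hi hj ⊢ <;> omega
  rcases le_total (idx a) (idx b) with hle | hle
  · exact key a b h hle
  · rw [mul_comm]
    exact key b a (fun h' => h (by rw [h', Sum.swap_swap])) hle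

theorem y_mul_s (a : Fin k ⊕ Fin k) : y K k d a * s K k d = 0 :=
  x_mul_x_eq_zero (Fin.le_last _) (fun l _ h => by rw [Fin.val_last] at h; omega) (idx_lt a).ne

theorem s_pow_succ (hk : k ≠ 0) : s K k d ^ (d + 1) = 0 := by
  rw [pow_succ, ← y_inl_mul_y_inr ⟨0, Nat.pos_of_ne_zero hk⟩, mul_assoc, y_mul_s, mul_zero]

theorem s_pow_mul_y {j : ℕ} (hj : j ≠ 0) (a : Fin k ⊕ Fin k) : s K k d ^ j * y K k d a = 0 := by
  obtain ⟨j, rfl⟩ := Nat.exists_eq_succ_of_ne_zero hj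
  rw [pow_succ, mul_assoc, mul_comm (s K k d), y_mul_s, mul_zero]

variable (k d) in
/-- The exponents of Macaulay's dual generator `Y_{2k}^d + ∑ l, Y_{2l} Y_{2l+1}` of `A`. -/
noncomputable def dualSupport : Finset (Fin (2 * k + 1) →₀ ℕ) :=
  insert (Finsupp.single (Fin.last (2 * k)) d) (Finset.univ.image fun l : Fin k =>
    Finsupp.single (idx (.inl l)) 1 + Finsupp.single (idx (.inr l)) 1)

theorem add_single_add_single_notMem_dualSupport (u : Fin (2 * k + 1) →₀ ℕ)
    {i j : Fin (2 * k + 1)} (hij : i ≤ j)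
    (hij' : ¬((∃ l, l < k ∧ (i : ℕ) = 2 * l ∧ (j : ℕ) = 2 * l + 1) ∨
        ((i : ℕ) = 2 * k ∧ (j : ℕ) = 2 * k))) :
    u + (Finsupp.single i 1 + Finsupp.single j 1) ∉ dualSupport k d := by
  simp only [dualSupport, Finset.mem_insert, Finset.mem_image, Finset.mem_univ, true_and, not_or,
    not_exists, not_and] at hij' ⊢
  have hij : (i : ℕ) ≤ j := hij
  refine ⟨fun hw => ?_, fun l hw => ?_⟩
  · have hi := DFunLike.congr_fun hw i
    have hj := DFunLike.congr_fun hw j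
    simp only [Finsupp.add_apply, Finsupp.single_apply, Fin.ext_iff, Fin.val_last] at hi hj
    have := hij'.2
    split_ifs at hi hj <;> omega
  · have hi := DFunLike.congr_fun hw i
    have hj := DFunLike.congr_fun hw j
    have := hij'.1 l l.2
    simp only [idx, Finsupp.add_apply, Finsupp.single_apply, Fin.ext_iff] at hi hj
    split_ifs at hi hj <;> omega

theorem add_pair_mem_dualSupport_iff (hd : d ≠ 0) (u : Fin (2 * k + 1) →₀ ℕ) (l : Fin k) :
    u + (Finsupp.single (idx (.inl l)) 1 + Finsupp.single (idx (.inr l)) 1) ∈ dualSupport k d ↔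
      u + Finsupp.single (Fin.last (2 * k)) d ∈ dualSupport k d := by
  have hl := idx_lt (.inl l)
  simp only [dualSupport, Finset.mem_insert, Finset.mem_image, Finset.mem_univ, true_and,
    add_eq_right]
  constructor
  · rintro (hw | ⟨l', hw⟩)
    · have h := DFunLike.congr_fun hw (idx (.inl l))
      simp only [Finsupp.add_apply, Finsupp.single_apply, Fin.ext_iff, Fin.val_last] at h
      split_ifs at h <;> omega
    · have h := DFunLike.congr_fun hw (idx (.inl l))
      simp only [idx, Finsupp.add_apply, Finsupp.single_apply, Fin.ext_iff] at h
      obtain rfl : l' = l := by ext; split_ifs at h <;> omega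
      exact Or.inl (add_eq_right.1 hw.symm)
  · rintro (rfl | ⟨l', hw⟩)
    · exact Or.inr ⟨l, (zero_add _).symm⟩
    · have h := DFunLike.congr_fun hw (Fin.last (2 * k))
      have := idx_lt (.inl l')
      have := idx_lt (.inr l')
      simp only [Finsupp.add_apply, Finsupp.single_apply, Fin.ext_iff, Fin.val_last] at h
      split_ifs at h <;> omega

theorem coeffSum_dualSupport_eq_zero (hd : d ≠ 0) {p : MvPolynomial (Fin (2 * k + 1)) K}
    (hp : p ∈ Ideal.span (relations K k d)) : coeffSum (dualSupport k d) p = 0 := by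
  refine coeffSum_eq_zero_of_mem_span (fun g hg u c => ?_) hp
  rcases hg with ⟨i, j, hij, hij', rfl⟩ | ⟨l, hl, rfl⟩
  · rw [X, X, monomial_mul, monomial_mul, mul_one, coeffSum_monomial,
      if_neg (add_single_add_single_notMem_dualSupport u hij hij')]
  · change coeffSum _ (monomial u c *
      (X (idx (.inl ⟨l, hl⟩)) * X (idx (.inr ⟨l, hl⟩)) - X (Fin.last (2 * k)) ^ d)) = 0
    rw [X, X, X_pow_eq_monomial, monomial_mul, mul_sub, monomial_mul, monomial_mul, mul_one,
      map_sub, coeffSum_monomial, coeffSum_monomial]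
    simp only [add_pair_mem_dualSupport_iff hd, sub_self]

theorem s_pow_ne_zero (hd : d ≠ 0) : s K k d ^ d ≠ 0 := by
  intro h
  rw [s, x, ← map_pow, Ideal.Quotient.eq_zero_iff_mem, X_pow_eq_monomial] at h
  have h1 := coeffSum_dualSupport_eq_zero hd h
  have hmem : Finsupp.single (Fin.last (2 * k)) d ∈ dualSupport k d :=
    Finset.mem_insert_self _ _
  rw [coeffSum_monomial, if_pos hmem] at h1
  exact one_ne_zero h1

variable (K k d) in
noncomputable def basisFun : (Fin k ⊕ Fin k) ⊕ Fin (d + 1) → A K k d :=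
  Sum.elim (y K k d) fun i => s K k d ^ (i : ℕ)

theorem s_pow_mem_span (hk : k ≠ 0) (e : ℕ) :
    s K k d ^ e ∈ Submodule.span K (Set.range (basisFun K k d)) := by
  rcases le_or_gt e d with he | he
  · exact Submodule.subset_span ⟨.inr ⟨e, by omega⟩, rfl⟩
  · rw [pow_eq_zero_of_le he (s_pow_succ hk)]
    exact zero_mem _

theorem basisFun_mul_x_mem_span (hk : k ≠ 0) (t : (Fin k ⊕ Fin k) ⊕ Fin (d + 1))
    (i : Fin (2 * k + 1)) :
    basisFun K k d t * x K k d i ∈ Submodule.span K (Set.range (basisFun K k d)) := by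
  rcases x_eq_s_or_exists_y K d i with h | ⟨b, h⟩ <;> rw [h] <;> rcases t with a | j <;>
    simp only [basisFun, Sum.elim_inl, Sum.elim_inr]
  · rw [y_mul_s]
    exact zero_mem _
  · rw [← pow_succ]
    exact s_pow_mem_span hk _
  · rw [y_mul_y]
    split_ifs
    exacts [s_pow_mem_span hk _, zero_mem _]
  · rcases eq_or_ne (j : ℕ) 0 with hj | hj
    · rw [hj, pow_zero, one_mul]
      exact Submodule.subset_span ⟨.inl b, rfl⟩
    · rw [s_pow_mul_y hj]
      exact zero_mem _

theorem span_basisFun (hk : k ≠ 0) : Submodule.span K (Set.range (basisFun K k d)) = ⊤ := by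
  set W := Submodule.span K (Set.range (basisFun K k d))
  have hmul : ∀ i, W ≤ W.comap (LinearMap.mulRight K (x K k d i)) := fun i =>
    Submodule.span_le.2 fun _ ⟨t, ht⟩ => ht ▸ basisFun_mul_x_mem_span hk t i
  refine Submodule.eq_top_iff'.2 fun a => ?_
  obtain ⟨p, rfl⟩ := Ideal.Quotient.mk_surjective a
  induction p using MvPolynomial.induction_on with
  | C c =>
    rw [← MvPolynomial.algebraMap_eq, Ideal.Quotient.mk_algebraMap,
      Algebra.algebraMap_eq_smul_one]
    exact W.smul_mem c (pow_zero (s K k d) ▸ s_pow_mem_span hk 0)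
  | add p q hp hq =>
    rw [map_add]
    exact add_mem hp hq
  | mul_X p i hp =>
    rw [map_mul]
    exact hmul i hp

theorem coeff_eq_zero_of_mul_eq_zero (hk : k ≠ 0) (hd : d ≠ 0)
    {c : (Fin k ⊕ Fin k) ⊕ Fin (d + 1) → K}
    (hs : (∑ t, c t • basisFun K k d t) * s K k d = 0)
    (hy : ∀ b, (∑ t, c t • basisFun K k d t) * y K k d b = 0)
    {t : (Fin k ⊕ Fin k) ⊕ Fin (d + 1)} (ht : t ≠ .inr (Fin.last d)) : c t = 0 := by
  have hsum : ∑ t, c t • basisFun K k d t =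
      ∑ a, c (.inl a) • y K k d a + ∑ i : Fin (d + 1), c (.inr i) • s K k d ^ (i : ℕ) := by
    simp [Fintype.sum_sum_type, basisFun]
  rw [hsum] at hs hy
  have hpow : ∀ i ≠ Fin.last d, c (.inr i) = 0 := fun i hi =>
    coeff_eq_zero_of_sum_smul_pow_mul_eq_zero (x := s K k d) (c := fun i => c (.inr i))
      (s_pow_ne_zero hd) (s_pow_succ hk)
      (by simpa [add_mul, Finset.sum_mul, smul_mul_assoc, y_mul_s] using hs) hi
  have hpow' : ∑ i : Fin (d + 1), c (.inr i) • s K k d ^ (i : ℕ) =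
      c (.inr (Fin.last d)) • s K k d ^ d := by
    rw [Fintype.sum_eq_single (Fin.last d) fun i hi => by rw [hpow i hi, zero_smul], Fin.val_last]
  have hpair : ∀ b, c (.inl b) = 0 := by
    intro b
    have h := hy b.swap
    simp only [hpow', add_mul, Finset.sum_mul, smul_mul_assoc, y_mul_y, s_pow_mul_y hd,
      Sum.swap_leftInverse.injective.eq_iff, smul_ite, smul_zero, add_zero, Finset.sum_ite_eq,
      Finset.mem_univ, if_true] at h
    exact (smul_eq_zero.1 h).resolve_right (s_pow_ne_zero hd)
  rcases t with a | i
  · exact hpair a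
  · exact hpow i fun h => ht (h ▸ rfl)

theorem sum_eq_smul_of_mul_eq_zero (hk : k ≠ 0) (hd : d ≠ 0)
    {c : (Fin k ⊕ Fin k) ⊕ Fin (d + 1) → K}
    (hs : (∑ t, c t • basisFun K k d t) * s K k d = 0)
    (hy : ∀ b, (∑ t, c t • basisFun K k d t) * y K k d b = 0) :
    ∑ t, c t • basisFun K k d t = c (.inr (Fin.last d)) • s K k d ^ d :=
  Fintype.sum_eq_single _ fun _ ht => by
    rw [coeff_eq_zero_of_mul_eq_zero hk hd hs hy ht, zero_smul]

theorem linearIndependent_basisFun (hk : k ≠ 0) (hd : d ≠ 0) :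
    LinearIndependent K (basisFun K k d) := by
  refine Fintype.linearIndependent_iff.2 fun c hc => ?_
  have hs : (∑ t, c t • basisFun K k d t) * s K k d = 0 := by rw [hc, zero_mul]
  have hy : ∀ b, (∑ t, c t • basisFun K k d t) * y K k d b = 0 := fun b => by
    rw [hc, zero_mul]
  have hlast : c (.inr (Fin.last d)) = 0 := by
    have h := sum_eq_smul_of_mul_eq_zero hk hd hs hy
    rw [hc] at h
    exact (smul_eq_zero.1 h.symm).resolve_right (s_pow_ne_zero hd)
  intro t
  by_cases ht : t = .inr (Fin.last d)
  · rwa [ht]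
  · exact coeff_eq_zero_of_mul_eq_zero hk hd hs hy ht

variable (K) in
noncomputable def basis (hk : k ≠ 0) (hd : d ≠ 0) :
    Module.Basis ((Fin k ⊕ Fin k) ⊕ Fin (d + 1)) K (A K k d) :=
  .mk (linearIndependent_basisFun hk hd) (span_basisFun hk).ge

theorem finrank_eq (hk : k ≠ 0) (hd : d ≠ 0) : Module.finrank K (A K k d) = 2 * k + d + 1 := by
  rw [Module.finrank_eq_card_basis (basis K hk hd)]
  simp only [Fintype.card_sum, Fintype.card_fin]
  ring

theorem mem_socle_iff {a : A K k d} :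
    a ∈ (⊥ : Ideal (A K k d)).colon (maxIdeal K k d) ↔
      a * s K k d = 0 ∧ ∀ b, a * y K k d b = 0 := by
  simp only [maxIdeal, Ideal.colon_span, Submodule.mem_colon, Set.forall_mem_range, smul_eq_mul,
    Submodule.mem_bot]
  refine ⟨fun h => ⟨h _, fun b => h _⟩, fun ⟨hs, hy⟩ i => ?_⟩
  rcases x_eq_s_or_exists_y K d i with h | ⟨b, h⟩ <;> rw [h]
  exacts [hs, hy b]

theorem s_pow_mem_socle (hk : k ≠ 0) (hd : d ≠ 0) :
    s K k d ^ d ∈ (⊥ : Ideal (A K k d)).colon (maxIdeal K k d) :=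
  mem_socle_iff.2 ⟨by rw [← pow_succ, s_pow_succ hk], fun b => s_pow_mul_y hd b⟩

theorem socle_eq (hk : k ≠ 0) (hd : d ≠ 0) :
    ((⊥ : Ideal (A K k d)).colon (maxIdeal K k d)).restrictScalars K =
      Submodule.span K {s K k d ^ d} := by
  refine le_antisymm (fun a ha => ?_)
    ((Submodule.span_singleton_le_iff_mem _ _).2 (s_pow_mem_socle hk hd))
  obtain ⟨c, rfl⟩ := (Submodule.mem_span_range_iff_exists_fun K).1
    ((span_basisFun (d := d) hk).ge (Submodule.mem_top (x := a)))
  obtain ⟨hs, hy⟩ := mem_socle_iff.1 ha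
  rw [sum_eq_smul_of_mul_eq_zero hk hd hs hy]
  exact Submodule.smul_mem _ _ (Submodule.mem_span_singleton_self _)

theorem finrank_socle (hk : k ≠ 0) (hd : d ≠ 0) :
    Module.finrank K (((⊥ : Ideal (A K k d)).colon (maxIdeal K k d)).restrictScalars K) = 1 := by
  rw [socle_eq hk hd]
  exact finrank_span_singleton (s_pow_ne_zero hd)

theorem maxIdeal_mul_maxIdeal_le (hd : 2 ≤ d) :
    maxIdeal K k d * maxIdeal K k d ≤ Ideal.span {s K k d ^ 2} := by
  rw [maxIdeal, Ideal.span_mul_span', Ideal.span_le]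
  rintro _ ⟨_, ⟨i, rfl⟩, _, ⟨j, rfl⟩, rfl⟩
  beta_reduce
  rcases x_eq_s_or_exists_y K d i with hi | ⟨a, hi⟩ <;>
    rcases x_eq_s_or_exists_y K d j with hj | ⟨b, hj⟩ <;> rw [hi, hj]
  · rw [← sq]
    exact Ideal.mem_span_singleton_self _
  · rw [mul_comm (s K k d), y_mul_s]
    exact zero_mem _
  · rw [y_mul_s]
    exact zero_mem _
  · rw [y_mul_y]
    split_ifs
    · exact Ideal.mem_span_singleton'.2
        ⟨s K k d ^ (d - 2), by rw [← pow_add, Nat.sub_add_cancel hd]⟩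
    · exact zero_mem _

theorem span_s_pow_mul_maxIdeal_le {e : ℕ} (he : e ≠ 0) :
    Ideal.span {s K k d ^ e} * maxIdeal K k d ≤ Ideal.span {s K k d ^ (e + 1)} := by
  rw [maxIdeal, Ideal.span_mul_span', Ideal.span_le]
  rintro _ ⟨_, rfl, _, ⟨i, rfl⟩, rfl⟩
  beta_reduce
  rcases x_eq_s_or_exists_y K d i with h | ⟨b, h⟩ <;> rw [h]
  · rw [← pow_succ]
    exact Ideal.mem_span_singleton_self _
  · rw [s_pow_mul_y he]
    exact zero_mem _

theorem maxIdeal_pow_le (hd : 2 ≤ d) (e : ℕ) :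
    maxIdeal K k d ^ (e + 2) ≤ Ideal.span {s K k d ^ (e + 2)} := by
  induction e with
  | zero =>
    rw [zero_add, sq (maxIdeal K k d)]
    exact maxIdeal_mul_maxIdeal_le hd
  | succ e ih =>
    rw [pow_succ]
    exact (Ideal.mul_mono_left ih).trans (span_s_pow_mul_maxIdeal_le (by omega))

theorem maxIdeal_pow_eq (hk : k ≠ 0) (hd : 2 ≤ d) :
    (maxIdeal K k d ^ d).restrictScalars K = Submodule.span K {s K k d ^ d} := by
  have hs : s K k d ∈ maxIdeal K k d := Ideal.subset_span (Set.mem_range_self _)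
  refine le_antisymm ?_ ((Submodule.span_singleton_le_iff_mem _ _).2 (Ideal.pow_mem_pow hs d))
  rw [← socle_eq hk (by omega)]
  intro a ha
  obtain ⟨e, rfl⟩ : ∃ e, d = e + 2 := ⟨d - 2, by omega⟩
  exact Ideal.span_le.2 (Set.singleton_subset_iff.2 (s_pow_mem_socle hk (by omega)))
    (maxIdeal_pow_le hd e ha)

theorem maxIdeal_isMaximal (hd : d ≠ 0) : (maxIdeal K k d).IsMaximal := by
  have hmap : maxIdeal K k d = (idealOfVars _ K).map (Ideal.Quotient.mk _) := by
    rw [idealOfVars, Ideal.map_span, ← Set.range_comp]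
    rfl
  rw [hmap]
  have := isMaximal_idealOfVars (σ := Fin (2 * k + 1)) (K := K)
  refine Ideal.IsMaximal.map_of_surjective_of_ker_le Ideal.Quotient.mk_surjective ?_
  rw [Ideal.mk_ker, Ideal.span_le]
  rintro _ (⟨i, j, -, -, rfl⟩ | ⟨l, hl, rfl⟩)
  · exact Ideal.mul_mem_right _ _ (Ideal.subset_span (Set.mem_range_self i))
  · exact sub_mem (Ideal.mul_mem_right _ _ (Ideal.subset_span (Set.mem_range_self _)))
      (Ideal.pow_mem_of_mem _ (Ideal.subset_span (Set.mem_range_self _)) d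
        (Nat.pos_of_ne_zero hd))

theorem isNilpotent_x (hk : k ≠ 0) (i : Fin (2 * k + 1)) : IsNilpotent (x K k d i) := by
  rcases x_eq_s_or_exists_y K d i with h | ⟨a, h⟩ <;> rw [h]
  · exact ⟨d + 1, s_pow_succ hk⟩
  · refine ⟨2, ?_⟩
    rw [sq, y_mul_y, if_neg]
    rcases a with l | l <;> simp

theorem isLocalRing (hk : k ≠ 0) (hd : d ≠ 0) : IsLocalRing (A K k d) := by
  have hM := maxIdeal_isMaximal (K := K) (k := k) hd
  have hnil : maxIdeal K k d ≤ nilradical _ :=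
    Ideal.span_le.2 fun _ ⟨i, hi⟩ => hi ▸ mem_nilradical.2 (isNilpotent_x hk i)
  exact IsLocalRing.of_unique_max_ideal ⟨_, hM, fun P hP =>
    (hM.eq_of_le hP.ne_top (hnil.trans (nilradical_le_prime P))).symm⟩

end Ank

/-- With `A_{n,k}` as in Statement 9 (`k ≥ 1`, `n - 2k ≥ 2`), letting
`m = ⟨S_1,...,S_{2k+1}⟩`, the socle `Soc A = {a : a·m = 0}` equals the one-dimensional span
of `S_{2k+1}^{n-2k}`, and `m^{n-2k} = ⟨S_{2k+1}^{n-2k}⟩`; hence `A_{n,k}` is a Gorenstein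
local algebra of dimension `n+1` whose socle equals `m^{n-2k}`. -/
theorem stmt10 (K : Type*) [Field K] (n k : ℕ) (hk : 1 ≤ k)
    (hnk : 2 * k + 2 ≤ n) :
    let I : Ideal (MvPolynomial (Fin (2 * k + 1)) K) :=
      Ideal.span
        ({p | ∃ i j : Fin (2 * k + 1), i ≤ j ∧
            ¬((∃ l, l < k ∧ (i : ℕ) = 2 * l ∧ (j : ℕ) = 2 * l + 1) ∨
              ((i : ℕ) = 2 * k ∧ (j : ℕ) = 2 * k)) ∧
            p = X i * X j} ∪
          {p | ∃ l, ∃ _ : l < k,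
            p = X (⟨2 * l, by omega⟩ : Fin (2 * k + 1)) *
                  X (⟨2 * l + 1, by omega⟩ : Fin (2 * k + 1)) -
                X (⟨2 * k, by omega⟩ : Fin (2 * k + 1)) ^ (n - 2 * k)});
    let A := MvPolynomial (Fin (2 * k + 1)) K ⧸ I;
    let M : Ideal A := Ideal.span (Set.range fun i : Fin (2 * k + 1) =>
      Ideal.Quotient.mk I (X i));
    let s : A := Ideal.Quotient.mk I (X (⟨2 * k, by omega⟩ : Fin (2 * k + 1)));
    IsLocalRing A ∧ M.IsMaximal ∧ Module.finrank K A = n + 1 ∧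
      ((⊥ : Ideal A).colon M).restrictScalars K = Submodule.span K {s ^ (n - 2 * k)} ∧
      (M ^ (n - 2 * k)).restrictScalars K = Submodule.span K {s ^ (n - 2 * k)} ∧
      Module.finrank K (((⊥ : Ideal A).colon M).restrictScalars K) = 1 := by
  intro I A M s
  have hk0 : k ≠ 0 := by omega
  have hd0 : n - 2 * k ≠ 0 := by omega
  exact ⟨Ank.isLocalRing hk0 hd0, Ank.maxIdeal_isMaximal hd0,
    (Ank.finrank_eq hk0 hd0).trans (by omega), Ank.socle_eq hk0 hd0,
    Ank.maxIdeal_pow_eq hk0 (by omega), Ank.finrank_socle hk0 hd0⟩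
end

section
/- For every pair of integers n, d with 2 ≤ d ≤ n, there exists a local Gorenstein commutative K-algebra A with maximal ideal m such that dim_K A = n + 1 and Soc A = m^d. -/
/-!
With `k = n - d`, the algebra `K[t, u₁, …, uₖ] / (t ^ (d + 1), t uᵢ, uᵢ uⱼ - δᵢⱼ t ^ d)` (the
connected sum of `K[t] / (t ^ (d + 1))` and a quadric) has the `K`-basis
`1, t, …, t ^ d, u₁, …, uₖ`, so it has dimension `n + 1`. It is the contracted algebra `K[M] / (0_M)` of its finite monoid of
monomials `M`. Giving `t` weight `2` and each `uᵢ` weight `d ≥ 2`, any `d + 1` non-identity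
monomials multiply to zero, so the ideal `m` spanned by them satisfies `m ^ (d + 1) = 0`; as
every element is a scalar plus an element of `m`, the algebra is local with maximal ideal `m`.
Every nonzero monomial other than `t ^ d` is sent to `t ^ d` by some monomial of `m` that sends
no other monomial there; comparing coefficients shows that the socle is `K t ^ d = m ^ d`.
-/

open scoped Pointwise

lemma Ideal.isMaximal_of_pow_eq_bot {K A : Type*} [Field K] [CommRing A] [Algebra K A]
    [Nontrivial A] {I : Ideal A} {n : ℕ} (hI : I ^ n = ⊥)
    (h : ∀ x : A, ∃ c : K, x - algebraMap K A c ∈ I) : I.IsMaximal := by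
  rw [Ideal.isMaximal_iff]
  refine ⟨fun h1 => ?_, fun J x _ hxI hxJ => ?_⟩
  · simpa [hI] using Ideal.pow_mem_pow h1 n
  obtain ⟨c, hc⟩ := h x
  have hc0 : c ≠ 0 := by
    rintro rfl
    exact hxI (by simpa using hc)
  have hnil : IsNilpotent (x - algebraMap K A c) :=
    ⟨n, by simpa [hI] using Ideal.pow_mem_pow hc n⟩
  have hx : IsUnit x := by
    simpa using hnil.isUnit_add_left_of_commute
      ((isUnit_iff_ne_zero.mpr hc0).map (algebraMap K A)) (Commute.all _ _)
  rw [J.eq_top_of_isUnit_mem hxJ hx]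
  exact Submodule.mem_top

lemma IsLocalRing.of_isMaximal_of_pow_eq_bot {R : Type*} [CommRing R] {I : Ideal R}
    (hI : I.IsMaximal) {n : ℕ} (h : I ^ n = ⊥) : IsLocalRing R :=
  .of_unique_max_ideal ⟨I, hI, fun _ hP =>
    have := hP.isPrime
    (hI.eq_of_le hP.ne_top (Ideal.IsPrime.le_of_pow_le (h ▸ bot_le))).symm⟩

lemma Ideal.comap_colon {R S : Type*} [CommRing R] [CommRing S] (e : R ≃+* S) (I J : Ideal S) :
    (I.colon J).comap e = (I.comap e).colon (J.comap e) := by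
  ext x
  simp only [Ideal.mem_comap, Submodule.mem_colon, smul_eq_mul]
  refine ⟨fun h y hy => by simpa using h _ hy, fun h y hy => ?_⟩
  obtain ⟨y, rfl⟩ := e.surjective y
  simpa using h y (by simpa using hy)

def IsLocalGorenstein (K : Type*) {R : Type*} [Field K] [CommRing R] [Algebra K R] (M : Ideal R)
    (r d : ℕ) : Prop :=
  IsLocalRing R ∧ M.IsMaximal ∧ FiniteDimensional K R ∧ Module.finrank K R = r ∧
    (⊥ : Ideal R).colon M = M ^ d ∧
    Module.finrank K (((⊥ : Ideal R).colon M).restrictScalars K) = 1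

lemma IsLocalGorenstein.comap {K R S : Type*} [Field K] [CommRing R] [Algebra K R] [CommRing S]
    [Algebra K S] {M : Ideal R} {r d : ℕ} (e : S ≃ₐ[K] R) (h : IsLocalGorenstein K M r d) :
    IsLocalGorenstein K (M.comap e) r d := by
  obtain ⟨hloc, hmax, hfin, hrank, hsoc, hsocrank⟩ := h
  have hcolon : (⊥ : Ideal S).colon (M.comap e) = ((⊥ : Ideal R).colon M).comap e := by
    rw [← Ideal.comap_bot_of_injective e e.injective]
    exact (Ideal.comap_colon e.toRingEquiv ⊥ M).symm
  refine ⟨e.toRingEquiv.symm.isLocalRing, Ideal.comap_isMaximal_of_surjective e e.surjective,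
    Module.Finite.equiv e.symm.toLinearEquiv, e.toLinearEquiv.finrank_eq.trans hrank, ?_, ?_⟩
  · have hmap (I : Ideal R) : I.comap e = I.map e.toRingEquiv.symm :=
      (Ideal.map_symm (I := I) e.toRingEquiv).symm
    rw [hcolon, hsoc, hmap, hmap, Ideal.map_pow]
  · have : (((⊥ : Ideal R).colon M).comap e).restrictScalars K =
        (((⊥ : Ideal R).colon M).restrictScalars K).comap e.toLinearEquiv.toLinearMap := rfl
    rw [hcolon, this, Submodule.comap_equiv_eq_map_symm, LinearEquiv.finrank_map_eq, hsocrank]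

open MonoidAlgebra

abbrev ContractedAlgebra (K M : Type*) [CommRing K] [CommMonoidWithZero M] :=
  MonoidAlgebra K M ⧸ Ideal.span {single (0 : M) (1 : K)}

namespace ContractedAlgebra

section CommRing

variable {K M : Type*} [CommRing K] [CommMonoidWithZero M]

lemma mem_span_single_zero_iff {f : MonoidAlgebra K M} :
    f ∈ Ideal.span {single (0 : M) (1 : K)} ↔ ∀ m ≠ 0, f.coeff m = 0 := by
  constructor
  · rintro hf m hm
    obtain ⟨g, rfl⟩ := Ideal.mem_span_singleton'.mp hf
    exact coeff_mul_single_of_forall_mul_ne _ _ fun m' => by rw [mul_zero]; exact hm.symm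
  · intro hf
    have : f = single 0 (f.coeff 0) * single 0 1 := by
      rw [single_mul_single, mul_zero, mul_one]
      ext m
      by_cases hm : m = 0
      · subst hm; simp
      · simp [hf m hm, Ne.symm hm]
    rw [this]
    exact Ideal.mul_mem_left _ _ (Ideal.subset_span rfl)

variable (K M) in
noncomputable def of : M →* ContractedAlgebra K M :=
  (Ideal.Quotient.mkₐ K _).toMonoidHom.comp (MonoidAlgebra.of K M)

lemma of_apply (m : M) : of K M m = Ideal.Quotient.mkₐ K _ (single m 1) := rfl

@[simp] lemma of_zero : of K M 0 = 0 :=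
  Ideal.Quotient.eq_zero_iff_mem.mpr (Ideal.subset_span rfl)

lemma of_ne_zero [Nontrivial K] {m : M} (hm : m ≠ 0) : of K M m ≠ 0 := by
  rw [of_apply, Ne, Ideal.Quotient.mkₐ_eq_mk, Ideal.Quotient.eq_zero_iff_mem,
    mem_span_single_zero_iff]
  intro h
  simpa using h m hm

instance [Nontrivial K] [Nontrivial M] : Nontrivial (ContractedAlgebra K M) :=
  ⟨⟨of K M 1, 0, of_ne_zero one_ne_zero⟩⟩

lemma mk_eq_smul_of {f : MonoidAlgebra K M} {m : M}
    (hf : ∀ m' ≠ 0, m' ≠ m → f.coeff m' = 0) :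
    Ideal.Quotient.mkₐ K _ f = f.coeff m • of K M m := by
  rw [of_apply, ← map_smul, smul_single, smul_eq_mul, mul_one, Ideal.Quotient.mkₐ_eq_mk,
    Ideal.Quotient.mk_eq_mk_iff_sub_mem, mem_span_single_zero_iff]
  intro m' hm'
  by_cases h : m' = m
  · subst h; simp
  · simp [hf m' hm' h, Ne.symm h]

lemma coeff_eq_zero_of_mk_mul_of_eq_zero {f : MonoidAlgebra K M} {q p m : M} (hp : p ≠ 0)
    (hq : ∀ m', m' * q = p ↔ m' = m) (h : Ideal.Quotient.mkₐ K _ f * of K M q = 0) :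
    f.coeff m = 0 := by
  rw [of_apply, ← map_mul, Ideal.Quotient.mkₐ_eq_mk, Ideal.Quotient.eq_zero_iff_mem,
    mem_span_single_zero_iff] at h
  simpa [coeff_mul_single_eq_coeff_mul m fun m' _ => hq m'] using h p hp

lemma exists_sub_algebraMap_mem_span (x : ContractedAlgebra K M) :
    ∃ c : K, x - algebraMap K _ c ∈ Ideal.span (of K M '' {1}ᶜ) := by
  obtain ⟨f, rfl⟩ := Ideal.Quotient.mkₐ_surjective K _ x
  induction f using MonoidAlgebra.induction_on with
  | of m =>
    change ∃ c : K, of K M m - algebraMap K _ c ∈ _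
    by_cases hm : m = 1
    · exact ⟨1, by simp [hm]⟩
    · exact ⟨0, by simpa using Ideal.subset_span (Set.mem_image_of_mem (of K M) hm)⟩
  | add f g hf hg =>
    obtain ⟨a, ha⟩ := hf
    obtain ⟨b, hb⟩ := hg
    exact ⟨a + b, by simpa [map_add, add_sub_add_comm] using Ideal.add_mem _ ha hb⟩
  | smul r f hf =>
    obtain ⟨a, ha⟩ := hf
    refine ⟨r * a, ?_⟩
    convert Submodule.smul_of_tower_mem _ r ha using 1
    rw [map_smul, smul_sub, map_mul]
    exact congrArg _ (Algebra.smul_def _ _).symm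

lemma span_image_pow (S : Set M) (n : ℕ) :
    Ideal.span (of K M '' S) ^ n = Ideal.span (of K M '' (S ^ n)) := by
  rw [Set.image_pow]
  exact Submodule.span_pow _ n

lemma bot_colon_le_span_of {S : Set M} {m₀ : M} (hm₀ : m₀ ≠ 0)
    (h : ∀ m ≠ 0, m ≠ m₀ → ∃ q ∈ S, ∀ m', m' * q = m₀ ↔ m' = m) :
    ((⊥ : Ideal (ContractedAlgebra K M)).colon (of K M '' S)).restrictScalars K ≤
      K ∙ of K M m₀ := by
  intro x hx
  obtain ⟨f, rfl⟩ := Ideal.Quotient.mkₐ_surjective K _ x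
  rw [mk_eq_smul_of (m := m₀)]
  · exact Submodule.smul_mem _ _ (Submodule.mem_span_singleton_self _)
  intro m hm hm₀'
  obtain ⟨q, hq, hqm⟩ := h m hm hm₀'
  have := (Submodule.mem_colon.mp hx) _ ⟨q, hq, rfl⟩
  exact coeff_eq_zero_of_mk_mul_of_eq_zero hm₀ hqm (by simpa using this)

end CommRing

section Field

variable {K M : Type*} [Field K] [CommMonoidWithZero M]

lemma finrank_add_one [Fintype M] :
    Module.finrank K (ContractedAlgebra K M) + 1 = Fintype.card M := by
  set I := Ideal.span {single (0 : M) (1 : K)}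
  have hI : I.restrictScalars K = K ∙ single 0 1 := by
    refine le_antisymm (fun f hf => ?_) ?_
    · rw [Submodule.mem_span_singleton]
      refine ⟨f.coeff 0, ?_⟩
      ext m
      by_cases hm : m = 0
      · subst hm; simp
      · simp [(mem_span_single_zero_iff.mp hf) m hm, Ne.symm hm]
    · rw [Submodule.span_le, Set.singleton_subset_iff]
      exact Ideal.subset_span rfl
  have h1 : Module.finrank K (I.restrictScalars K) = 1 := by
    rw [hI]
    exact finrank_span_singleton (by simp)
  rw [← (Submodule.Quotient.restrictScalarsEquiv K I).finrank_eq, ← h1,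
    Submodule.finrank_quotient_add_finrank,
    Module.finrank_eq_card_basis (MonoidAlgebra.basis M K)]

variable (K M) in
noncomputable def maxIdeal : Ideal (ContractedAlgebra K M) := Ideal.span (of K M '' {1}ᶜ)

lemma maxIdeal_pow_eq_bot {n : ℕ} (h : ({1}ᶜ : Set M) ^ n ⊆ {0}) : maxIdeal K M ^ n = ⊥ := by
  rw [maxIdeal, span_image_pow, Ideal.span_eq_bot]
  rintro _ ⟨m, hm, rfl⟩
  rw [h hm, of_zero]

lemma isMaximal_maxIdeal [Nontrivial M] {n : ℕ} (h : ({1}ᶜ : Set M) ^ n ⊆ {0}) :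
    (maxIdeal K M).IsMaximal :=
  Ideal.isMaximal_of_pow_eq_bot (maxIdeal_pow_eq_bot h) exists_sub_algebraMap_mem_span

theorem isLocalGorenstein [Fintype M] [Nontrivial M] {d : ℕ} {m₀ : M}
    (hnil : ({1}ᶜ : Set M) ^ (d + 1) ⊆ {0}) (hm₀ : m₀ ∈ ({1}ᶜ : Set M) ^ d)
    (hm₀' : m₀ ≠ 0) (hdual : ∀ m ≠ 0, m ≠ m₀ → ∃ q ∈ ({1}ᶜ : Set M), ∀ m', m' * q = m₀ ↔ m' = m) :
    IsLocalGorenstein K (maxIdeal K M) (Fintype.card M - 1) d := by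
  have hbot : maxIdeal K M ^ (d + 1) = ⊥ := maxIdeal_pow_eq_bot hnil
  have hmax : (maxIdeal K M).IsMaximal := isMaximal_maxIdeal hnil
  have hpow_le : maxIdeal K M ^ d ≤ (⊥ : Ideal _).colon (maxIdeal K M) := fun x hx =>
    Submodule.mem_colon.mpr fun y hy => by
      have := Ideal.mul_mem_mul hx hy
      rwa [← Submodule.pow_succ, hbot] at this
  have hm₀_mem : of K M m₀ ∈ maxIdeal K M ^ d := by
    rw [maxIdeal, span_image_pow]
    exact Ideal.subset_span ⟨m₀, hm₀, rfl⟩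
  have hle : ((⊥ : Ideal _).colon (maxIdeal K M)).restrictScalars K ≤ K ∙ of K M m₀ := by
    rw [maxIdeal, Ideal.colon_span]
    exact bot_colon_le_span_of hm₀' hdual
  have hsoc : ((⊥ : Ideal _).colon (maxIdeal K M)).restrictScalars K = K ∙ of K M m₀ :=
    le_antisymm hle (Submodule.span_le.mpr (Set.singleton_subset_iff.mpr (hpow_le hm₀_mem)))
  have hrank : Module.finrank K (ContractedAlgebra K M) = Fintype.card M - 1 := by
    have := finrank_add_one (K := K) (M := M)
    omega
  refine ⟨.of_isMaximal_of_pow_eq_bot hmax hbot, hmax, inferInstance, hrank,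
    le_antisymm (fun x hx => ?_) hpow_le, ?_⟩
  · obtain ⟨c, rfl⟩ := Submodule.mem_span_singleton.mp (hle hx)
    exact Submodule.smul_of_tower_mem _ c hm₀_mem
  · rw [hsoc]
    exact finrank_span_singleton (of_ne_zero hm₀')

end Field

end ContractedAlgebra

/-- The monomials of `K[t, u₁, …, uₖ] / (t ^ (d + 1), t uᵢ, uᵢ uⱼ - δᵢⱼ t ^ d)`:
`t i` is `t ^ i` and `zero` absorbs everything. -/
inductive ConnectedSumMonoid (d k : ℕ) where
  | zero : ConnectedSumMonoid d k
  | t : Fin (d + 1) → ConnectedSumMonoid d k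
  | u : Fin k → ConnectedSumMonoid d k

namespace ConnectedSumMonoid

variable {d k : ℕ}

def equivOption : ConnectedSumMonoid d k ≃ Option (Fin (d + 1) ⊕ Fin k) where
  toFun
    | zero => none
    | t i => some (.inl i)
    | u j => some (.inr j)
  invFun
    | none => zero
    | some (.inl i) => t i
    | some (.inr j) => u j
  left_inv m := by cases m <;> rfl
  right_inv o := by rcases o with _ | i | j <;> rfl

instance : Fintype (ConnectedSumMonoid d k) := Fintype.ofEquiv _ equivOption.symm

lemma card_eq : Fintype.card (ConnectedSumMonoid d k) = d + k + 2 := by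
  rw [Fintype.card_congr equivOption]
  simp
  omega

def mul : ConnectedSumMonoid d k → ConnectedSumMonoid d k → ConnectedSumMonoid d k
  | t i, t j => if h : i.1 + j.1 ≤ d then t ⟨i.1 + j.1, by omega⟩ else zero
  | t i, u j | u j, t i => if i.1 = 0 then u j else zero
  | u i, u j => if i = j then t (Fin.last d) else zero
  | _, _ => zero

instance : Mul (ConnectedSumMonoid d k) := ⟨mul⟩
instance : One (ConnectedSumMonoid d k) := ⟨t 0⟩
instance : Zero (ConnectedSumMonoid d k) := ⟨zero⟩

@[simp] lemma t_mul_t (i j : Fin (d + 1)) :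
    t i * t j =
      if h : i.1 + j.1 ≤ d then t ⟨i.1 + j.1, by omega⟩ else (zero : ConnectedSumMonoid d k) :=
  rfl

@[simp] lemma t_mul_u (i : Fin (d + 1)) (j : Fin k) :
    t i * u j = if i.1 = 0 then u j else (zero : ConnectedSumMonoid d k) := rfl

@[simp] lemma u_mul_t (i : Fin (d + 1)) (j : Fin k) :
    u j * t i = if i.1 = 0 then u j else (zero : ConnectedSumMonoid d k) := rfl

@[simp] lemma u_mul_u (i j : Fin k) :
    u i * u j = if i = j then t (Fin.last d) else (zero : ConnectedSumMonoid d k) := rfl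

@[simp] protected lemma zero_mul (a : ConnectedSumMonoid d k) : zero * a = zero := rfl

@[simp] protected lemma mul_zero (a : ConnectedSumMonoid d k) : a * zero = zero := by
  cases a <;> rfl

lemma one_def : (1 : ConnectedSumMonoid d k) = t 0 := rfl

instance : Nontrivial (ConnectedSumMonoid d k) := ⟨⟨zero, t 0, nofun⟩⟩

protected lemma mul_comm (a b : ConnectedSumMonoid d k) : a * b = b * a := by
  cases a <;> cases b <;> simp only [t_mul_t, t_mul_u, u_mul_t, u_mul_u,
      ConnectedSumMonoid.zero_mul, ConnectedSumMonoid.mul_zero] <;>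
    split_ifs <;> simp_all [add_comm, eq_comm]
  omega

protected lemma mul_assoc [NeZero d] (a b c : ConnectedSumMonoid d k) :
    a * b * c = a * (b * c) := by
  cases a <;> cases b <;> cases c <;> simp only [t_mul_t, t_mul_u, u_mul_t, u_mul_u,
      ConnectedSumMonoid.zero_mul, ConnectedSumMonoid.mul_zero] <;>
    split_ifs <;> simp_all [add_assoc]
  all_goals first
    | omega
    | exact NeZero.ne d
    | simp only [Fin.ext_iff, Fin.val_last, Fin.val_zero] at *

instance [NeZero d] : CommMonoidWithZero (ConnectedSumMonoid d k) where
  mul_assoc := ConnectedSumMonoid.mul_assoc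
  one_mul a := by cases a <;> simp [one_def, Fin.is_le]
  mul_one a := by cases a <;> simp [one_def, Fin.is_le]
  zero_mul _ := rfl
  mul_zero := ConnectedSumMonoid.mul_zero
  mul_comm := ConnectedSumMonoid.mul_comm

/-- Grading with `deg t = 2` and `deg uⱼ = d`, which makes `uⱼ ^ 2 = t ^ d` homogeneous. -/
def weight : ConnectedSumMonoid d k → ℕ∞
  | zero => ⊤
  | t i => 2 * i.1
  | u _ => d

lemma weight_add_le_weight_mul (a b : ConnectedSumMonoid d k) :
    weight a + weight b ≤ weight (a * b) := by
  cases a <;> cases b <;> simp only [t_mul_t, t_mul_u, u_mul_t, u_mul_u,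
      ConnectedSumMonoid.zero_mul, ConnectedSumMonoid.mul_zero] <;>
    (try split_ifs) <;> simp [weight]
  all_goals norm_cast; omega

lemma two_le_weight (hd : 2 ≤ d) {m : ConnectedSumMonoid d k} (hm : m ≠ 1) : 2 ≤ weight m := by
  cases m with
  | zero => simp [weight]
  | t i =>
    have : i.1 ≠ 0 := fun h => hm (by rw [one_def]; congr; exact Fin.ext h)
    simp only [weight]; norm_cast; omega
  | u j => simp only [weight]; exact_mod_cast hd

lemma eq_zero_of_lt_weight {m : ConnectedSumMonoid d k} (hm : 2 * d < weight m) : m = 0 := by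
  cases m with
  | zero => rfl
  | t i => simp only [weight] at hm; norm_cast at hm; omega
  | u j => simp only [weight] at hm; norm_cast at hm; omega

lemma pow_compl_one_subset_le_weight [NeZero d] (hd : 2 ≤ d) (n : ℕ) :
    ({1}ᶜ : Set (ConnectedSumMonoid d k)) ^ n ⊆ {m | ((2 * n : ℕ) : ℕ∞) ≤ weight m} := by
  induction n with
  | zero => simp
  | succ n ih =>
    rintro _ ⟨a, ha, b, hb, rfl⟩
    calc (((2 * (n + 1) : ℕ)) : ℕ∞) = ((2 * n : ℕ) : ℕ∞) + 2 := by push_cast; ring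
      _ ≤ weight a + weight b := add_le_add (ih ha) (two_le_weight hd hb)
      _ ≤ weight (a * b) := weight_add_le_weight_mul a b

lemma exists_mul_eq_last_iff {m : ConnectedSumMonoid d k} (hm : m ≠ 0)
    (hm' : m ≠ t (Fin.last d)) :
    ∃ q ∈ ({1}ᶜ : Set (ConnectedSumMonoid d k)), ∀ m', m' * q = t (Fin.last d) ↔ m' = m := by
  cases m with
  | zero => exact absurd rfl hm
  | t i =>
    refine ⟨t i.rev, fun h => hm' ?_, fun m' => ?_⟩
    · simp [one_def, Fin.ext_iff] at h ⊢
      omega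
    · cases m' <;> simp only [t_mul_t, u_mul_t, ConnectedSumMonoid.zero_mul] <;>
        (try split_ifs) <;> simp_all [Fin.ext_iff, Fin.val_rev]
      all_goals omega
  | u j =>
    refine ⟨u j, nofun, fun m' => ?_⟩
    cases m' <;> simp only [t_mul_u, u_mul_u, ConnectedSumMonoid.zero_mul] <;>
      (try split_ifs) <;> simp_all

variable [NeZero d]

lemma pow_compl_one_subset_zero (hd : 2 ≤ d) :
    ({1}ᶜ : Set (ConnectedSumMonoid d k)) ^ (d + 1) ⊆ {0} := fun m hm =>
  eq_zero_of_lt_weight <|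
    lt_of_lt_of_le (by norm_cast; omega) (pow_compl_one_subset_le_weight hd _ hm)

lemma t_one_pow (i : ℕ) (hi : i ≤ d) : (t 1 : ConnectedSumMonoid d k) ^ i = t ⟨i, by omega⟩ := by
  have h1 : ((1 : Fin (d + 1)) : ℕ) = 1 := by
    rw [Fin.val_one', Nat.mod_eq_of_lt (by have := NeZero.pos d; omega)]
  induction i with
  | zero => rfl
  | succ i ih =>
    rw [pow_succ, ih (by omega), t_mul_t, dif_pos (by rw [h1]; exact hi)]
    simp only [h1]

lemma last_mem_pow : t (Fin.last d) ∈ ({1}ᶜ : Set (ConnectedSumMonoid d k)) ^ d := by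
  rw [Fin.last, ← t_one_pow d le_rfl]
  refine Set.pow_mem_pow fun h => ?_
  simp [one_def] at h

end ConnectedSumMonoid

theorem stmt11_general (K : Type*) [Field K] (n d : ℕ)
    (h2 : 2 ≤ d) (hdn : d ≤ n) :
    ∃ (k : ℕ) (I : Ideal (MvPolynomial (Fin k) K))
      (M : Ideal (MvPolynomial (Fin k) K ⧸ I)),
      IsLocalRing (MvPolynomial (Fin k) K ⧸ I) ∧ M.IsMaximal ∧
      FiniteDimensional K (MvPolynomial (Fin k) K ⧸ I) ∧
      Module.finrank K (MvPolynomial (Fin k) K ⧸ I) = n + 1 ∧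
      (⊥ : Ideal (MvPolynomial (Fin k) K ⧸ I)).colon M = M ^ d ∧
      Module.finrank K
        (((⊥ : Ideal (MvPolynomial (Fin k) K ⧸ I)).colon M).restrictScalars K) = 1 := by
  obtain ⟨k, rfl⟩ := Nat.exists_eq_add_of_le hdn
  have : NeZero d := ⟨by omega⟩
  obtain ⟨r, φ, hφ⟩ := Algebra.FiniteType.iff_quotient_mvPolynomial''.mp
    (inferInstance : Algebra.FiniteType K (ContractedAlgebra K (ConnectedSumMonoid d k)))
  have h := ContractedAlgebra.isLocalGorenstein (K := K)
    (ConnectedSumMonoid.pow_compl_one_subset_zero (k := k) h2) ConnectedSumMonoid.last_mem_pow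
    nofun fun _ => ConnectedSumMonoid.exists_mul_eq_last_iff
  rw [ConnectedSumMonoid.card_eq, show d + k + 2 - 1 = d + k + 1 by omega] at h
  exact ⟨r, RingHom.ker φ, _, h.comap (Ideal.quotientKerAlgEquivOfSurjective hφ)⟩

/-- For all integers `n, d` with `2 ≤ d ≤ n`, there exists a local Gorenstein
commutative `K`-algebra `A` with maximal ideal `m` such that `dim_K A = n + 1` and
`Soc A = m^d` (and `dim_K Soc A = 1`). The algebra is realized as a quotient of a
polynomial ring, `M` being its maximal ideal. -/
theorem stmt11 (K : Type*) [Field K] [IsAlgClosed K] [CharZero K] (n d : ℕ)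
    (h2 : 2 ≤ d) (hdn : d ≤ n) :
    ∃ (k : ℕ) (I : Ideal (MvPolynomial (Fin k) K))
      (M : Ideal (MvPolynomial (Fin k) K ⧸ I)),
      IsLocalRing (MvPolynomial (Fin k) K ⧸ I) ∧ M.IsMaximal ∧
      FiniteDimensional K (MvPolynomial (Fin k) K ⧸ I) ∧
      Module.finrank K (MvPolynomial (Fin k) K ⧸ I) = n + 1 ∧
      (⊥ : Ideal (MvPolynomial (Fin k) K ⧸ I)).colon M = M ^ d ∧
      Module.finrank K
        (((⊥ : Ideal (MvPolynomial (Fin k) K ⧸ I)).colon M).restrictScalars K) = 1 :=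
  stmt11_general K n d h2 hdn
end

section
/- The algebra A_5 = K[x,y,z]/(x^2, y^2, xz, yz, xy - z^3) is a 6-dimensional local Gorenstein K-algebra: its maximal ideal m has basis the classes of x, y, z, z^2, z^3, and Soc A_5 = m^3 = ⟨z^3⟩ is one-dimensional. -/
/-!
With `M = (x, y, z)`, the relations alone give `M² = (z²)`, `M³ = M · (z²) = (z³)` and
`M · z³ = 0`, so `M⁴ = 0` and `z³` lies in the socle. Since every element is a scalar plus an
element of `M`, each `Mⁱ` is the `K`-span of its generators modulo `Mⁱ⁺¹`, and running down this
filtration shows that `1, x, y, z, z², z³` span `A`.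

Independence comes from the Macaulay dual generator `XY + Z³`: the functional
`λ p = coeff_{xy} p + coeff_{z³} p` kills the ideal of relations, and `λ (b'ᵢ bⱼ) = δᵢⱼ` for
`b = (1, x, y, z, z², z³)` and `b' = (z³, y, x, z², z, 1)`. The `i`-th coordinate of `a` is
therefore `λ (b'ᵢ a)`, which vanishes for `i ≠ 5` when `a` is killed by `M ∋ b'ᵢ`; hence the
socle is `K z³ = M³`.
-/

open MvPolynomial

lemma Ideal.span_mul_span_le {R : Type*} [CommSemiring R] {S T : Set R} {J : Ideal R}
    (h : ∀ s ∈ S, ∀ t ∈ T, s * t ∈ J) : Ideal.span S * Ideal.span T ≤ J := by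
  rw [Ideal.span_mul_span', Ideal.span_le]
  exact Set.mul_subset_iff.2 h

lemma AddMonoidHom.map_eq_zero_of_mem_ideal_span {R M : Type*} [CommSemiring R] [AddCommMonoid M]
    (f : R →+ M) {S : Set R} (hS : ∀ r, ∀ s ∈ S, f (r * s) = 0) {p : R}
    (hp : p ∈ Ideal.span S) : f p = 0 := by
  suffices ∀ r, f (r * p) = 0 by simpa using this 1
  induction hp using Submodule.span_induction with
  | mem s hs => exact fun r => hS r s hs
  | zero => simp
  | add p q _ _ hp hq => intro r; rw [mul_add, map_add, hp, hq, add_zero]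
  | smul a p _ hp => intro r; rw [smul_eq_mul, ← mul_assoc]; exact hp _

lemma IsLocalRing.of_isMaximal_of_pow_eq_bot_s13 {R : Type*} [CommRing R] {M : Ideal R}
    (hM : M.IsMaximal) {n : ℕ} (hn : M ^ n = ⊥) : IsLocalRing R :=
  .of_unique_max_ideal ⟨M, hM, fun _ hP =>
    (hM.eq_of_le hP.ne_top (hP.isPrime.le_of_pow_le (hn ▸ bot_le))).symm⟩

section Augmented

variable {K A : Type*} [CommRing A]

lemma Ideal.isMaximal_of_forall_exists_sub_algebraMap_mem [Field K] [Algebra K A] {M : Ideal A}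
    (hM : M ≠ ⊤) (h : ∀ a : A, ∃ c : K, a - algebraMap K A c ∈ M) : M.IsMaximal := by
  refine Ideal.isMaximal_iff.2 ⟨(Ideal.ne_top_iff_one M).1 hM, fun J a hMJ haM haJ => ?_⟩
  obtain ⟨c, hc⟩ := h a
  have hc0 : c ≠ 0 := by
    rintro rfl
    exact haM (by simpa using hc)
  have hcJ : algebraMap K A c ∈ J := by simpa using J.sub_mem haJ (hMJ hc)
  exact (Ideal.eq_top_iff_one J).1
    (Ideal.eq_top_of_isUnit_mem J hcJ ((isUnit_iff_ne_zero.2 hc0).map _))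

lemma Ideal.restrictScalars_span_le_span_sup_mul [CommSemiring K] [Algebra K A] {M : Ideal A}
    (hM : ∀ a : A, ∃ c : K, a - algebraMap K A c ∈ M) (S : Set A) :
    (Ideal.span S).restrictScalars K ≤
      Submodule.span K S ⊔ (M * Ideal.span S).restrictScalars K := by
  intro a ha
  induction ha using Submodule.span_induction with
  | mem s hs => exact Submodule.mem_sup_left (Submodule.subset_span hs)
  | zero => exact zero_mem _
  | add _ _ _ _ h₁ h₂ => exact add_mem h₁ h₂
  | smul r j hj ih =>
    obtain ⟨c, hc⟩ := hM r
    have hr : r • j = c • j + (r - algebraMap K A c) * j := by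
      rw [smul_eq_mul, Algebra.smul_def]; ring
    rw [hr]
    exact add_mem (Submodule.smul_mem _ c ih) (Submodule.mem_sup_right (Ideal.mul_mem_mul hc hj))

end Augmented

lemma apply_mul_sum_smul_of_pairing {K A ι : Type*} [CommSemiring K] [Semiring A] [Algebra K A]
    [Fintype ι] [DecidableEq ι] (f : A →ₗ[K] K) {b b' : ι → A}
    (hb : ∀ i j, f (b' i * b j) = if i = j then 1 else 0) (c : ι → K) (i : ι) :
    f (b' i * ∑ j, c j • b j) = c i := by
  simp [Finset.mul_sum, hb]

lemma linearIndependent_of_pairing {K A ι : Type*} [CommSemiring K] [Semiring A] [Algebra K A]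
    [Fintype ι] [DecidableEq ι] (f : A →ₗ[K] K) {b b' : ι → A}
    (hb : ∀ i j, f (b' i * b j) = if i = j then 1 else 0) : LinearIndependent K b :=
  Fintype.linearIndependent_iffₛ.2 fun c d hcd i => by
    rw [← apply_mul_sum_smul_of_pairing f hb c i, hcd, apply_mul_sum_smul_of_pairing f hb d i]

structure A5Relations {A : Type*} [CommRing A] (x y z : A) : Prop where
  x_mul_x : x * x = 0
  y_mul_y : y * y = 0
  x_mul_z : x * z = 0
  y_mul_z : y * z = 0
  x_mul_y : x * y = z ^ 3

namespace A5Relations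

variable {A : Type*} [CommRing A] {x y z : A}

lemma span_sq (h : A5Relations x y z) : Ideal.span {x, y, z} ^ 2 = Ideal.span {z ^ 2} := by
  obtain ⟨hxx, hyy, hxz, hyz, hxy⟩ := h
  refine le_antisymm ?_ ?_
  · rw [sq]
    refine Ideal.span_mul_span_le ?_
    simp only [Set.mem_insert_iff, Set.mem_singleton_iff, Ideal.mem_span_singleton]
    rintro s (rfl | rfl | rfl) t (rfl | rfl | rfl) <;>
      first | exact ⟨0, by grind⟩ | exact ⟨1, by grind⟩ | exact ⟨z, by grind⟩
  · rw [Ideal.span_le, Set.singleton_subset_iff]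
    exact Ideal.pow_mem_pow (Ideal.subset_span (by simp)) 2

lemma span_mul_span_z_sq (h : A5Relations x y z) :
    Ideal.span {x, y, z} * Ideal.span {z ^ 2} = Ideal.span {z ^ 3} := by
  obtain ⟨hxx, hyy, hxz, hyz, hxy⟩ := h
  refine le_antisymm (Ideal.span_mul_span_le ?_) ?_
  · simp only [Set.mem_insert_iff, Set.mem_singleton_iff, Ideal.mem_span_singleton]
    rintro s (rfl | rfl | rfl) t rfl <;> first | exact ⟨0, by grind⟩ | exact ⟨1, by grind⟩
  · rw [Ideal.span_le, Set.singleton_subset_iff, show z ^ 3 = z * z ^ 2 by ring]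
    have hz : z ∈ Ideal.span {x, y, z} := Ideal.subset_span (by simp)
    exact Ideal.mul_mem_mul hz (Ideal.mem_span_singleton_self _)

lemma span_mul_span_z_cube (h : A5Relations x y z) :
    Ideal.span {x, y, z} * Ideal.span {z ^ 3} = ⊥ := by
  obtain ⟨hxx, hyy, hxz, hyz, hxy⟩ := h
  refine le_bot_iff.1 (Ideal.span_mul_span_le ?_)
  simp only [Set.mem_insert_iff, Set.mem_singleton_iff, Ideal.mem_bot]
  rintro s (rfl | rfl | rfl) t rfl <;> grind

lemma span_pow_three (h : A5Relations x y z) : Ideal.span {x, y, z} ^ 3 = Ideal.span {z ^ 3} := by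
  rw [pow_succ', h.span_sq, h.span_mul_span_z_sq]

lemma span_pow_four (h : A5Relations x y z) : Ideal.span {x, y, z} ^ 4 = ⊥ := by
  rw [pow_succ', h.span_pow_three, h.span_mul_span_z_cube]

lemma span_z_cube_le_annihilator (h : A5Relations x y z) :
    Ideal.span {z ^ 3} ≤ (Ideal.span {x, y, z}).annihilator := by
  rw [Submodule.le_annihilator_iff, Ideal.smul_eq_mul, mul_comm, h.span_mul_span_z_cube]

section Algebra

variable {K : Type*} [CommRing K] [Algebra K A]

lemma restrictScalars_span_z_cube (h : A5Relations x y z)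
    (hA : ∀ a : A, ∃ c : K, a - algebraMap K A c ∈ Ideal.span {x, y, z}) :
    (Ideal.span {z ^ 3}).restrictScalars K = Submodule.span K {z ^ 3} := by
  refine le_antisymm ((Ideal.restrictScalars_span_le_span_sup_mul hA _).trans ?_)
    (Submodule.span_le_restrictScalars K A _)
  simp [h.span_mul_span_z_cube]

lemma restrictScalars_span_z_sq_le (h : A5Relations x y z)
    (hA : ∀ a : A, ∃ c : K, a - algebraMap K A c ∈ Ideal.span {x, y, z}) :
    (Ideal.span {z ^ 2}).restrictScalars K ≤ Submodule.span K {z ^ 2, z ^ 3} := by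
  refine (Ideal.restrictScalars_span_le_span_sup_mul hA _).trans ?_
  rw [h.span_mul_span_z_sq, h.restrictScalars_span_z_cube hA, ← Submodule.span_union,
    Set.singleton_union]

lemma restrictScalars_span_le (h : A5Relations x y z)
    (hA : ∀ a : A, ∃ c : K, a - algebraMap K A c ∈ Ideal.span {x, y, z}) :
    (Ideal.span {x, y, z}).restrictScalars K ≤ Submodule.span K {x, y, z, z ^ 2, z ^ 3} := by
  refine (Ideal.restrictScalars_span_le_span_sup_mul hA _).trans ?_
  rw [← sq, h.span_sq]
  refine (sup_le_sup_left (h.restrictScalars_span_z_sq_le hA) _).trans_eq ?_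
  rw [← Submodule.span_union, Set.insert_union, Set.insert_union, Set.singleton_union]

lemma top_le_span (h : A5Relations x y z)
    (hA : ∀ a : A, ∃ c : K, a - algebraMap K A c ∈ Ideal.span {x, y, z}) :
    ⊤ ≤ Submodule.span K {1, x, y, z, z ^ 2, z ^ 3} := by
  have h1 := Ideal.restrictScalars_span_le_span_sup_mul hA {1}
  rw [Ideal.span_singleton_one, Ideal.mul_top, Submodule.restrictScalars_top] at h1
  refine h1.trans ((sup_le_sup_left (h.restrictScalars_span_le hA) _).trans_eq ?_)
  rw [← Submodule.span_union, Set.singleton_union]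

end Algebra

end A5Relations

noncomputable abbrev A5.ideal (K : Type*) [Field K] : Ideal (MvPolynomial (Fin 3) K) :=
  Ideal.span {X 0 ^ 2, X 1 ^ 2, X 0 * X 2, X 1 * X 2, X 0 * X 1 - X 2 ^ 3}

abbrev A5 (K : Type*) [Field K] := MvPolynomial (Fin 3) K ⧸ A5.ideal K

namespace A5

variable (K : Type*) [Field K]

noncomputable abbrev gen (i : Fin 3) : A5 K := Ideal.Quotient.mk (ideal K) (X i)

noncomputable abbrev maxIdeal : Ideal (A5 K) := Ideal.span {gen K 0, gen K 1, gen K 2}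

lemma relations : A5Relations (gen K 0) (gen K 1) (gen K 2) := by
  have hI : ∀ p ∈ ({X 0 ^ 2, X 1 ^ 2, X 0 * X 2, X 1 * X 2, X 0 * X 1 - X 2 ^ 3} :
      Set (MvPolynomial (Fin 3) K)), Ideal.Quotient.mk (ideal K) p = 0 :=
    fun p hp => Ideal.Quotient.eq_zero_iff_mem.2 (Ideal.subset_span hp)
  refine ⟨?_, ?_, ?_, ?_, ?_⟩
  · rw [← map_mul, ← sq]; exact hI _ (by simp)
  · rw [← map_mul, ← sq]; exact hI _ (by simp)
  · rw [← map_mul]; exact hI _ (by simp)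
  · rw [← map_mul]; exact hI _ (by simp)
  · rw [← sub_eq_zero, ← map_mul, ← map_pow, ← map_sub]; exact hI _ (by simp)

lemma exists_sub_algebraMap_mem (a : A5 K) :
    ∃ c : K, a - algebraMap K (A5 K) c ∈ maxIdeal K := by
  obtain ⟨p, rfl⟩ := Ideal.Quotient.mk_surjective a
  induction p using MvPolynomial.induction_on with
  | C c =>
    refine ⟨c, ?_⟩
    rw [← MvPolynomial.algebraMap_eq, Ideal.Quotient.mk_algebraMap, sub_self]
    exact zero_mem _
  | add p q hp hq =>
    obtain ⟨c, hc⟩ := hp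
    obtain ⟨d, hd⟩ := hq
    exact ⟨c + d, by simpa [add_sub_add_comm] using add_mem hc hd⟩
  | mul_X p i _ =>
    refine ⟨0, ?_⟩
    rw [map_zero, sub_zero, map_mul]
    refine Ideal.mul_mem_left _ _ (Ideal.subset_span ?_)
    fin_cases i <;> simp

noncomputable def dualGenerator : MvPolynomial (Fin 3) K →ₗ[K] K :=
  lcoeff K (Finsupp.single 0 1 + Finsupp.single 1 1) + lcoeff K (Finsupp.single 2 3)

lemma dualGenerator_eq_zero_of_mem {p : MvPolynomial (Fin 3) K} (hp : p ∈ ideal K) :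
    dualGenerator K p = 0 := by
  refine (dualGenerator K).toAddMonoidHom.map_eq_zero_of_mem_ideal_span ?_ hp
  rintro r s (rfl | rfl | rfl | rfl | rfl) <;>
    simp [dualGenerator, mul_sub, X, monomial_pow, monomial_mul, coeff_mul_monomial',
      Finsupp.le_def, Fin.forall_fin_succ]

noncomputable def dualFunctional : A5 K →ₗ[K] K :=
  ((ideal K).restrictScalars K).liftQ (dualGenerator K)
      (fun _ => dualGenerator_eq_zero_of_mem K) ∘ₗ
    (Submodule.Quotient.restrictScalarsEquiv K (ideal K)).symm.toLinearMap

lemma dualFunctional_mk (p : MvPolynomial (Fin 3) K) :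
    dualFunctional K (Ideal.Quotient.mk _ p) = dualGenerator K p := rfl

noncomputable def monomials : Fin 6 → A5 K :=
  fun i => Ideal.Quotient.mk _ (![1, X 0, X 1, X 2, X 2 ^ 2, X 2 ^ 3] i)

noncomputable def dualMonomials : Fin 6 → A5 K :=
  fun i => Ideal.Quotient.mk _ (![X 2 ^ 3, X 1, X 0, X 2 ^ 2, X 2, 1] i)

lemma dualFunctional_pairing (i j : Fin 6) :
    dualFunctional K (dualMonomials K i * monomials K j) = if i = j then 1 else 0 := by
  rw [dualMonomials, monomials, ← map_mul, dualFunctional_mk]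
  fin_cases i <;> fin_cases j <;>
    simp [dualGenerator, X, monomial_pow, monomial_mul, coeff_monomial, coeff_one,
      Finsupp.ext_iff, Fin.forall_fin_succ]

lemma linearIndependent_monomials : LinearIndependent K (monomials K) :=
  linearIndependent_of_pairing (dualFunctional K) (dualFunctional_pairing K)

lemma top_le_span_monomials : ⊤ ≤ Submodule.span K (Set.range (monomials K)) := by
  refine ((relations K).top_le_span (exists_sub_algebraMap_mem K)).trans (Submodule.span_mono ?_)
  rintro _ (rfl | rfl | rfl | rfl | rfl | rfl)
  exacts [⟨0, map_one _⟩, ⟨1, rfl⟩, ⟨2, rfl⟩, ⟨3, rfl⟩, ⟨4, map_pow _ _ _⟩, ⟨5, map_pow _ _ _⟩]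

noncomputable def basis : Module.Basis (Fin 6) K (A5 K) :=
  .mk (linearIndependent_monomials K) (top_le_span_monomials K)

lemma finrank_eq_six : Module.finrank K (A5 K) = 6 := by
  simp [Module.finrank_eq_card_basis (basis K)]

lemma gen_two_pow_three_ne_zero : gen K 2 ^ 3 ≠ 0 := by
  simpa [monomials] using (linearIndependent_monomials K).ne_zero 5

lemma one_notMem_maxIdeal : (1 : A5 K) ∉ maxIdeal K := fun h1 =>
  gen_two_pow_three_ne_zero K (by
    simpa using Submodule.mem_annihilator.1
      ((relations K).span_z_cube_le_annihilator (Ideal.mem_span_singleton_self _)) 1 h1)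

lemma maxIdeal_isMaximal : (maxIdeal K).IsMaximal :=
  Ideal.isMaximal_of_forall_exists_sub_algebraMap_mem
    ((Ideal.ne_top_iff_one _).2 (one_notMem_maxIdeal K)) (exists_sub_algebraMap_mem K)

lemma isLocalRing : IsLocalRing (A5 K) :=
  .of_isMaximal_of_pow_eq_bot (maxIdeal_isMaximal K) (relations K).span_pow_four

lemma dualMonomials_mem_maxIdeal {i : Fin 6} (hi : i ≠ 5) : dualMonomials K i ∈ maxIdeal K := by
  have hz : gen K 2 ∈ maxIdeal K := Ideal.subset_span (by simp)
  fin_cases i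
  · simpa [dualMonomials] using Ideal.pow_mem_of_mem _ hz 3 (by norm_num)
  · exact Ideal.subset_span (by simp [dualMonomials])
  · exact Ideal.subset_span (by simp [dualMonomials])
  · simpa [dualMonomials] using Ideal.pow_mem_of_mem _ hz 2 (by norm_num)
  · exact hz
  · exact absurd rfl hi

lemma annihilator_maxIdeal_le : (maxIdeal K).annihilator ≤ Ideal.span {gen K 2 ^ 3} := by
  intro a ha
  obtain ⟨c, rfl⟩ := (Submodule.mem_span_range_iff_exists_fun K).1
    (top_le_span_monomials K (Submodule.mem_top (x := a)))
  have hc : ∀ i, i ≠ 5 → c i = 0 := fun i hi => by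
    have hci := Submodule.mem_annihilator.1 ha _ (dualMonomials_mem_maxIdeal K hi)
    rw [smul_eq_mul, mul_comm] at hci
    rw [← apply_mul_sum_smul_of_pairing (dualFunctional K) (dualFunctional_pairing K) c i, hci,
      map_zero]
  rw [Fin.sum_univ_six, hc 0 (by decide), hc 1 (by decide), hc 2 (by decide), hc 3 (by decide),
    hc 4 (by decide)]
  simp only [zero_smul, zero_add]
  exact Submodule.smul_of_tower_mem _ (c 5) (by simp [monomials])

lemma colon_maxIdeal : (⊥ : Ideal (A5 K)).colon (maxIdeal K) = maxIdeal K ^ 3 := by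
  rw [Submodule.bot_colon, (relations K).span_pow_three]
  exact le_antisymm (annihilator_maxIdeal_le K) (relations K).span_z_cube_le_annihilator

lemma linearIndependent_gens :
    LinearIndependent K ![gen K 0, gen K 1, gen K 2, gen K 2 ^ 2, gen K 2 ^ 3] := by
  convert (linearIndependent_monomials K).comp Fin.succ (Fin.succ_injective 5) using 1
  funext i
  fin_cases i <;> simp [monomials]

lemma restrictScalars_maxIdeal : (maxIdeal K).restrictScalars K =
    Submodule.span K {gen K 0, gen K 1, gen K 2, gen K 2 ^ 2, gen K 2 ^ 3} := by
  refine le_antisymm ((relations K).restrictScalars_span_le (exists_sub_algebraMap_mem K)) ?_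
  have hz : gen K 2 ∈ maxIdeal K := Ideal.subset_span (by simp)
  rw [Submodule.span_le]
  rintro _ (rfl | rfl | rfl | rfl | rfl)
  exacts [Ideal.subset_span (by simp), Ideal.subset_span (by simp), hz,
    Ideal.pow_mem_of_mem _ hz 2 (by norm_num), Ideal.pow_mem_of_mem _ hz 3 (by norm_num)]

lemma restrictScalars_maxIdeal_pow_three :
    (maxIdeal K ^ 3).restrictScalars K = Submodule.span K {gen K 2 ^ 3} := by
  rw [(relations K).span_pow_three]
  exact (relations K).restrictScalars_span_z_cube (exists_sub_algebraMap_mem K)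

lemma finrank_colon_maxIdeal :
    Module.finrank K (((⊥ : Ideal (A5 K)).colon (maxIdeal K)).restrictScalars K) = 1 := by
  rw [colon_maxIdeal, restrictScalars_maxIdeal_pow_three]
  exact finrank_span_singleton (gen_two_pow_three_ne_zero K)

end A5

theorem stmt13_general (K : Type*) [Field K] :
    let I : Ideal (MvPolynomial (Fin 3) K) :=
      Ideal.span {X 0 ^ 2, X 1 ^ 2, X 0 * X 2, X 1 * X 2, X 0 * X 1 - X 2 ^ 3};
    let A := MvPolynomial (Fin 3) K ⧸ I;
    let q : MvPolynomial (Fin 3) K →+* A := Ideal.Quotient.mk I;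
    let M : Ideal A := Ideal.span {q (X 0), q (X 1), q (X 2)};
    IsLocalRing A ∧ M.IsMaximal ∧ Module.finrank K A = 6 ∧
      LinearIndependent K
        ![q (X 0), q (X 1), q (X 2), q (X 2 ^ 2), q (X 2 ^ 3)] ∧
      M.restrictScalars K =
        Submodule.span K {q (X 0), q (X 1), q (X 2), q (X 2 ^ 2), q (X 2 ^ 3)} ∧
      (⊥ : Ideal A).colon M = M ^ 3 ∧
      (M ^ 3).restrictScalars K = Submodule.span K {q (X 2 ^ 3)} ∧
      Module.finrank K (((⊥ : Ideal A).colon M).restrictScalars K) = 1 := by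
  intro I A q M
  simp only [map_pow]
  exact ⟨A5.isLocalRing K, A5.maxIdeal_isMaximal K, A5.finrank_eq_six K,
    A5.linearIndependent_gens K, A5.restrictScalars_maxIdeal K, A5.colon_maxIdeal K,
    A5.restrictScalars_maxIdeal_pow_three K, A5.finrank_colon_maxIdeal K⟩

/-- `A_5 = K[x,y,z]/(x^2, y^2, xz, yz, xy - z^3)` is a 6-dimensional local
Gorenstein `K`-algebra: its maximal ideal `m` has basis the classes of
`x, y, z, z^2, z^3`, and `Soc A_5 = m^3 = ⟨z^3⟩` is one-dimensional. -/
theorem stmt13 (K : Type*) [Field K] [CharZero K] :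
    let I : Ideal (MvPolynomial (Fin 3) K) :=
      Ideal.span {X 0 ^ 2, X 1 ^ 2, X 0 * X 2, X 1 * X 2, X 0 * X 1 - X 2 ^ 3};
    let A := MvPolynomial (Fin 3) K ⧸ I;
    let q : MvPolynomial (Fin 3) K →+* A := Ideal.Quotient.mk I;
    let M : Ideal A := Ideal.span {q (X 0), q (X 1), q (X 2)};
    IsLocalRing A ∧ M.IsMaximal ∧ Module.finrank K A = 6 ∧
      LinearIndependent K
        ![q (X 0), q (X 1), q (X 2), q (X 2 ^ 2), q (X 2 ^ 3)] ∧
      M.restrictScalars K =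
        Submodule.span K {q (X 0), q (X 1), q (X 2), q (X 2 ^ 2), q (X 2 ^ 3)} ∧
      (⊥ : Ideal A).colon M = M ^ 3 ∧
      (M ^ 3).restrictScalars K = Submodule.span K {q (X 2 ^ 3)} ∧
      Module.finrank K (((⊥ : Ideal A).colon M).restrictScalars K) = 1 :=
  stmt13_general K
end

section
/- In A = K[x]/(x^{n+1}) (n ≥ 2) with maximal ideal m = (x) and Soc A = ⟨x^n⟩, for any two hyperplanes U, U' of m complementary to ⟨x^n⟩ there exists a K-algebra automorphism φ of A with φ(U) = U'. -/
/-!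
A complement `U` of `⟨x ^ n⟩` in `𝔪 = (x)` is the graph of its coefficients: it is spanned by
vectors `x ^ j + μ_j x ^ n`, `1 ≤ j < n`. The automorphism `x ↦ x + b x ^ (n + 1 - k)` fixes
`x ^ n` and every `x ^ j` with `j > k`, and sends `x ^ k` to `x ^ k + k b x ^ n`; as `k` is
invertible in characteristic zero, it makes the `k`-th coefficient of `U` agree with that of `U'`
without disturbing the higher ones. Doing this for `k = n - 1, …, 1` carries `U` onto `U'`.
Such shears are bijective because they act unipotently on the `x`-adic filtration.
-/

open Polynomial Submodule

theorem eq_of_sup_eq_of_inf_eq_bot_of_le_inf_sup {α : Type*} [Lattice α] [OrderBot α]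
    [IsModularLattice α] {a b c m : α} (ha : a ⊔ c = m) (ha' : a ⊓ c = ⊥) (hb : b ⊔ c = m)
    (hb' : b ⊓ c = ⊥) (h : m ≤ a ⊓ b ⊔ c) : a = b := by
  have inf_eq : ∀ {a b : α}, a ⊔ c = m → a ⊓ c = ⊥ → m ≤ a ⊓ b ⊔ c → a ⊓ b = a :=
    fun ha ha' h => eq_of_le_of_inf_le_of_sup_le inf_le_left (by simp [ha']) (ha ▸ h)
  rw [← inf_eq ha ha' h, inf_comm, inf_eq hb hb' (inf_comm a b ▸ h)]

section Module

variable {R M : Type*} [Ring R] [AddCommGroup M] [Module R M]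

theorem mem_sup_span_singleton_iff {P : Submodule R M} {c v : M} :
    v ∈ P ⊔ span R {c} ↔ ∃ t : R, v + t • c ∈ P := by
  constructor
  · intro h
    obtain ⟨w, hw, z, hz, rfl⟩ := mem_sup.mp h
    obtain ⟨t, rfl⟩ := mem_span_singleton.mp hz
    exact ⟨-t, by simpa [add_assoc] using hw⟩
  · rintro ⟨t, ht⟩
    rw [← add_sub_cancel_right v (t • c)]
    exact sub_mem (mem_sup_left ht) (mem_sup_right (smul_mem _ _ (mem_span_singleton_self c)))

variable {f : M →ₗ[R] M} {W m : Submodule R M} {c : M}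

theorem map_sup_span_singleton_of_apply_eq (hm : m.map f = m) (hc : f c = c)
    (h : W ⊔ span R {c} = m) : W.map f ⊔ span R {c} = m := by
  rw [← hm, ← h, Submodule.map_sup, map_span, Set.image_singleton, hc]

theorem map_inf_span_singleton_eq_bot (hf : Function.Injective f) (hc : f c = c)
    (h : W ⊓ span R {c} = ⊥) : W.map f ⊓ span R {c} = ⊥ := by
  rw [← hc, ← Set.image_singleton, ← map_span, ← map_inf f hf, h, Submodule.map_bot]

theorem mem_map_inf_sup_of_apply_eq {U : Submodule R M} {v : M} (hv : f v = v) (hc : f c = c)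
    (h : v ∈ W ⊓ U ⊔ span R {c}) : v ∈ W.map f ⊓ U ⊔ span R {c} := by
  obtain ⟨t, hW, hU⟩ := mem_sup_span_singleton_iff.mp h
  refine mem_sup_span_singleton_iff.mpr ⟨t, ?_, hU⟩
  simpa [hv, hc] using mem_map_of_mem (f := f) hW

end Module

section CommRing

variable {R : Type*} [CommRing R]

theorem exists_one_add_pow_eq (y : R) (j : ℕ) : ∃ q, (1 + y) ^ j = 1 + j * y + y ^ 2 * q := by
  induction j with
  | zero => exact ⟨0, by simp⟩
  | succ j ih =>
    obtain ⟨q, hq⟩ := ih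
    exact ⟨j + q + q * y, by rw [pow_succ, hq]; push_cast; ring⟩

theorem pow_succ_dvd_map_sub (θ : R →+* R) {x u : R} (hθx : θ x = x * u) (hu : x ∣ u - 1)
    (hθ : ∀ r, x ∣ θ r - r) {i : ℕ} {y : R} (hy : x ^ i ∣ y) : x ^ (i + 1) ∣ θ y - y := by
  obtain ⟨t, rfl⟩ := hy
  have hdvd : x ∣ u ^ i * (θ t - t) + (u ^ i - 1) * t :=
    dvd_add (dvd_mul_of_dvd_right (hθ t) _)
      (dvd_mul_of_dvd_left (hu.trans (sub_one_dvd_pow_sub_one u i)) _)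
  rw [pow_succ]
  convert mul_dvd_mul_left (x ^ i) hdvd using 1
  rw [map_mul, map_pow, hθx]
  ring

theorem bijective_of_pow_succ_dvd_map_sub (θ : R →+* R) {x : R} {N : ℕ} (hx : x ^ N = 0)
    (h : ∀ i y, x ^ i ∣ y → x ^ (i + 1) ∣ θ y - y) : Function.Bijective θ := by
  constructor
  · rw [injective_iff_map_eq_zero]
    intro y hy
    have hdvd : ∀ i, x ^ i ∣ y := by
      intro i
      induction i with
      | zero => simp
      | succ i ih => simpa [hy] using h i y ih
    simpa [hx] using hdvd N
  · intro r
    have happrox : ∀ i, ∃ s, x ^ i ∣ r - θ s := by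
      intro i
      induction i with
      | zero => exact ⟨0, by simp⟩
      | succ i ih =>
        obtain ⟨s, t, ht⟩ := ih
        refine ⟨s + x ^ i * t, ?_⟩
        have := h i (x ^ i * t) (dvd_mul_right _ _)
        rw [← dvd_neg, neg_sub] at this
        convert this using 1
        rw [map_add, ← ht]
        ring
    obtain ⟨s, hs⟩ := happrox N
    exact ⟨s, (sub_eq_zero.mp (by simpa [hx] using hs)).symm⟩

end CommRing

noncomputable section

abbrev TruncPoly (K : Type*) [Field K] (n : ℕ) : Type _ :=
  K[X] ⧸ Ideal.span {(X : K[X]) ^ (n + 1)}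

namespace TruncPoly

variable {K : Type*} [Field K] {n : ℕ}

abbrev mk : K[X] →+* TruncPoly K n := Ideal.Quotient.mk _

abbrev x : TruncPoly K n := mk X

def maxIdeal : Submodule K (TruncPoly K n) :=
  span K (Set.range fun i : Fin n => mk (X ^ ((i : ℕ) + 1)))

theorem x_pow_eq_zero {e : ℕ} (he : n + 1 ≤ e) : (x : TruncPoly K n) ^ e = 0 := by
  refine pow_eq_zero_of_le he ?_
  rw [← map_pow, Ideal.Quotient.eq_zero_iff_mem]
  exact Ideal.subset_span rfl

theorem mk_monomial (k : ℕ) (a : K) : (mk (monomial k a) : TruncPoly K n) = a • x ^ k := by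
  rw [← C_mul_X_pow_eq_monomial, map_mul, map_pow]
  exact (Algebra.smul_def a (x ^ k : TruncPoly K n)).symm

theorem mem_maxIdeal_iff {v : TruncPoly K n} : v ∈ maxIdeal ↔ x ∣ v := by
  constructor
  · intro hv
    refine Ideal.mem_span_singleton.mp
      ((span_le (p := (Ideal.span {x}).restrictScalars K)).mpr ?_ hv)
    rintro _ ⟨i, rfl⟩
    exact Ideal.mem_span_singleton.mpr (by
      show x ∣ mk (X ^ ((i : ℕ) + 1))
      rw [map_pow]; exact dvd_pow_self _ (Nat.succ_ne_zero _))
  · rintro ⟨s, rfl⟩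
    obtain ⟨p, rfl⟩ := Ideal.Quotient.mk_surjective s
    induction p using Polynomial.induction_on' with
    | add p q hp hq => rw [map_add, mul_add]; exact add_mem hp hq
    | monomial k a =>
      rw [mk_monomial, mul_smul_comm, ← pow_succ']
      by_cases hk : k + 1 ≤ n
      · exact smul_mem _ _ (subset_span ⟨⟨k, hk⟩, map_pow _ _ _⟩)
      · rw [x_pow_eq_zero (by omega), smul_zero]
        exact zero_mem _

theorem x_pow_mem_maxIdeal {j : ℕ} (hj : 1 ≤ j) : (x : TruncPoly K n) ^ j ∈ maxIdeal :=
  mem_maxIdeal_iff.mpr (dvd_pow_self _ (by omega))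

def shearHom (b : K) (d : ℕ) : TruncPoly K n →ₐ[K] TruncPoly K n :=
  Ideal.Quotient.liftₐ _ (aeval (x * (1 + b • x ^ (d + 1)))) fun p hp => by
    obtain ⟨r, rfl⟩ := Ideal.mem_span_singleton'.mp hp
    rw [map_mul, map_pow, aeval_X, mul_pow, x_pow_eq_zero le_rfl, zero_mul, mul_zero]

section Shear

variable (b : K) (d : ℕ)

theorem shearHom_mk (p : K[X]) :
    shearHom b d (mk p : TruncPoly K n) = aeval (x * (1 + b • x ^ (d + 1))) p :=
  Ideal.Quotient.liftₐ_apply _ _ _ _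

theorem shearHom_x : shearHom b d (x : TruncPoly K n) = x * (1 + b • x ^ (d + 1)) := by
  rw [shearHom_mk, aeval_X]

theorem x_dvd_shearHom_sub (r : TruncPoly K n) : x ∣ shearHom b d r - r := by
  obtain ⟨p, rfl⟩ := Ideal.Quotient.mk_surjective r
  have hmk : (mk p : TruncPoly K n) = aeval x p := by
    rw [show (x : TruncPoly K n) = Ideal.Quotient.mkₐ K (Ideal.span {(X : K[X]) ^ (n + 1)}) X
      from rfl, aeval_algHom_apply, aeval_X_left_apply]
    rfl
  have hsub : (x : TruncPoly K n) * (1 + b • x ^ (d + 1)) - x = x * (b • x ^ (d + 1)) := by ring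
  rw [shearHom_mk, hmk, ← eval_map_algebraMap, ← eval_map_algebraMap]
  exact (Dvd.intro _ hsub.symm).trans (sub_dvd_eval_sub _ _ _)

def shear : TruncPoly K n ≃ₐ[K] TruncPoly K n :=
  AlgEquiv.ofBijective (shearHom b d) <|
    bijective_of_pow_succ_dvd_map_sub (shearHom b d).toRingHom (x_pow_eq_zero le_rfl)
      fun _ _ => pow_succ_dvd_map_sub _ (shearHom_x b d)
        (by rw [add_sub_cancel_left, pow_succ' (x : TruncPoly K n), ← mul_smul_comm]
            exact dvd_mul_right _ _)
        (x_dvd_shearHom_sub b d)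

theorem shear_apply (r : TruncPoly K n) : shear b d r = shearHom b d r := rfl

theorem shear_x_pow {j : ℕ} (hj : n ≤ j + d + 1) :
    shear b d (x ^ j : TruncPoly K n) = x ^ j + (j * b) • x ^ (j + d + 1) := by
  obtain ⟨q, hq⟩ := exists_one_add_pow_eq (b • (x : TruncPoly K n) ^ (d + 1)) j
  have h0 : (x : TruncPoly K n) ^ (j + 2 * d + 2) = 0 := x_pow_eq_zero (by omega)
  rw [shear_apply, map_pow, shearHom_x, mul_pow, hq]
  -- the `•` of the quotient is not syntactically `Algebra.toSMul`, so `simp` cannot unfold it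
  have hsmul : ∀ (a : K) (y : TruncPoly K n), a • y = algebraMap K _ a * y :=
    fun a y => Algebra.smul_def a y
  rw [hsmul, hsmul, map_mul, map_natCast]
  linear_combination (algebraMap K _ b ^ 2 * q) * h0

theorem shear_x_pow_of_lt {j : ℕ} (hj : n < j + d + 1) :
    shear b d (x ^ j : TruncPoly K n) = x ^ j := by
  rw [shear_x_pow b d hj.le, x_pow_eq_zero hj, smul_zero, add_zero]

theorem map_shear_maxIdeal :
    maxIdeal.map (shear b d).toLinearMap = (maxIdeal : Submodule K (TruncPoly K n)) := by
  ext v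
  rw [← AlgEquiv.toLinearEquiv_toLinearMap, mem_map_equiv, mem_maxIdeal_iff, mem_maxIdeal_iff]
  refine (dvd_iff_dvd_of_dvd_sub ?_).symm
  simpa [← shear_apply] using x_dvd_shearHom_sub b d ((shear b d).symm v)

end Shear

theorem map_shear_sup_eq (b : K) (d : ℕ) {W : Submodule K (TruncPoly K n)}
    (hW : W ⊔ span K {x ^ n} = maxIdeal) :
    W.map (shear b d).toLinearMap ⊔ span K {x ^ n} = maxIdeal :=
  map_sup_span_singleton_of_apply_eq (map_shear_maxIdeal b d)
    (shear_x_pow_of_lt b d (by omega)) hW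

theorem map_shear_inf_eq_bot (b : K) (d : ℕ) {W : Submodule K (TruncPoly K n)}
    (hW : W ⊓ span K {x ^ n} = ⊥) : W.map (shear b d).toLinearMap ⊓ span K {x ^ n} = ⊥ :=
  map_inf_span_singleton_eq_bot (shear b d).injective (shear_x_pow_of_lt b d (by omega)) hW

theorem exists_shear_mem_inf_sup [CharZero K] {k : ℕ} (hk : 1 ≤ k) (hkn : k < n)
    {W U : Submodule K (TruncPoly K n)} (hW : W ⊔ span K {x ^ n} = maxIdeal)
    (hU : U ⊔ span K {x ^ n} = maxIdeal)
    (hagree : ∀ j, k < j → j < n → x ^ j ∈ W ⊓ U ⊔ span K {x ^ n}) :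
    ∃ b d, ∀ j, k ≤ j → j < n →
      x ^ j ∈ W.map (shear b d).toLinearMap ⊓ U ⊔ span K {x ^ n} := by
  obtain ⟨t, ht⟩ := mem_sup_span_singleton_iff.mp (hW ▸ x_pow_mem_maxIdeal hk)
  obtain ⟨s, hs⟩ := mem_sup_span_singleton_iff.mp (hU ▸ x_pow_mem_maxIdeal hk)
  have hk0 : (k : K) ≠ 0 := Nat.cast_ne_zero.mpr (by omega)
  -- `shear b (n - 1 - k)` is `x ↦ x + b x ^ (n + 1 - k)`, which moves `x ^ k` by `k b x ^ n`.
  refine ⟨(s - t) / k, n - 1 - k, fun j hkj hjn => ?_⟩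
  rcases hkj.eq_or_lt with rfl | hkj
  · have hshear : shear ((s - t) / k) (n - 1 - k) (x ^ k + t • x ^ n : TruncPoly K n) =
        x ^ k + s • x ^ n := by
      rw [map_add, map_smul, shear_x_pow _ _ (by omega), shear_x_pow_of_lt _ _ (by omega),
        show k + (n - 1 - k) + 1 = n by omega, mul_div_cancel₀ _ hk0, add_assoc, ← add_smul,
        sub_add_cancel]
    refine mem_sup_span_singleton_iff.mpr ⟨s, ?_, hs⟩
    exact hshear ▸ mem_map_of_mem ht
  · exact mem_map_inf_sup_of_apply_eq (shear_x_pow_of_lt _ _ (by omega))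
      (shear_x_pow_of_lt _ _ (by omega)) (hagree j hkj hjn)

theorem eq_of_mem_inf_sup {W U : Submodule K (TruncPoly K n)}
    (hW : W ⊔ span K {x ^ n} = maxIdeal) (hW' : W ⊓ span K {x ^ n} = ⊥)
    (hU : U ⊔ span K {x ^ n} = maxIdeal) (hU' : U ⊓ span K {x ^ n} = ⊥)
    (hagree : ∀ j, 1 ≤ j → j < n → x ^ j ∈ W ⊓ U ⊔ span K {x ^ n}) : W = U := by
  refine eq_of_sup_eq_of_inf_eq_bot_of_le_inf_sup hW hW' hU hU' (span_le.mpr ?_)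
  rintro _ ⟨i, rfl⟩
  change mk (X ^ ((i : ℕ) + 1)) ∈ _
  rw [map_pow]
  rcases (show (i : ℕ) + 1 ≤ n from i.isLt).lt_or_eq with hi | hi
  · exact hagree _ (by omega) hi
  · rw [hi]
    exact mem_sup_right (mem_span_singleton_self _)

theorem exists_map_eq_of_mem_inf_sup [CharZero K] {U : Submodule K (TruncPoly K n)}
    (hU : U ⊔ span K {x ^ n} = maxIdeal) (hU' : U ⊓ span K {x ^ n} = ⊥) {k : ℕ} (hk : 1 ≤ k)
    (hkn : k ≤ n) {W : Submodule K (TruncPoly K n)} (hW : W ⊔ span K {x ^ n} = maxIdeal)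
    (hW' : W ⊓ span K {x ^ n} = ⊥)
    (hagree : ∀ j, k ≤ j → j < n → x ^ j ∈ W ⊓ U ⊔ span K {x ^ n}) :
    ∃ φ : TruncPoly K n ≃ₐ[K] TruncPoly K n, W.map φ.toLinearMap = U := by
  induction k, hk using Nat.le_induction generalizing W with
  | base =>
    exact ⟨AlgEquiv.refl, (Submodule.map_id W).trans (eq_of_mem_inf_sup hW hW' hU hU' hagree)⟩
  | succ k hk ih =>
    obtain ⟨b, d, hagree'⟩ := exists_shear_mem_inf_sup hk hkn hW hU hagree
    obtain ⟨φ, hφ⟩ :=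
      ih (by omega) (map_shear_sup_eq b d hW) (map_shear_inf_eq_bot b d hW') hagree'
    refine ⟨(shear b d).trans φ, ?_⟩
    rw [AlgEquiv.trans_toLinearMap, Submodule.map_comp, hφ]

end TruncPoly

end

/-- In `A = K[x]/(x^{n+1})` (`n ≥ 2`) with maximal ideal
`m = ⟨x, x^2, ..., x^n⟩_K` and `Soc A = ⟨x^n⟩`, for any two hyperplanes `U, U'` of `m`
complementary to `⟨x^n⟩` there exists a `K`-algebra automorphism `φ` of `A` with
`φ(U) = U'`. -/
theorem stmt16 (K : Type*) [Field K] [CharZero K] (n : ℕ) (hn : 2 ≤ n) :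
    let I : Ideal (Polynomial K) := Ideal.span {Polynomial.X ^ (n + 1)};
    let A := Polynomial K ⧸ I;
    let q : Polynomial K →+* A := Ideal.Quotient.mk I;
    let m : Submodule K A :=
      Submodule.span K (Set.range fun i : Fin n => q (Polynomial.X ^ ((i : ℕ) + 1)));
    let c : A := q (Polynomial.X ^ n);
    ∀ U U' : Submodule K A,
      U ⊔ Submodule.span K {c} = m → U ⊓ Submodule.span K {c} = ⊥ →
      U' ⊔ Submodule.span K {c} = m → U' ⊓ Submodule.span K {c} = ⊥ →
      ∃ φ : A ≃ₐ[K] A, U.map φ.toLinearMap = U' := by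
  intro I A q m c U U' hU hU' hV hV'
  have hc : c = TruncPoly.x ^ n := map_pow q X n
  rw [hc] at hU hU' hV hV'
  exact TruncPoly.exists_map_eq_of_mem_inf_sup hV hV' (by omega) le_rfl hU hU'
    fun j hj hjn => absurd hjn (by omega)
end

section
/- The polynomial f = z_0^2 z_5 - z_0 z_1 z_3 - z_0 z_2 z_4 + (1/3) z_1^3 + (1/3) z_2^3 in K[z_0,...,z_5] is such that the common vanishing locus of all six partial derivatives of f within the hypersurface {f = 0} in projective 5-space is exactly the projective subspace {z_0 = z_1 = z_2 = 0}; in particular the singular locus of this cubic hypersurface has codimension 2 in it. -/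
open MvPolynomial

/-- For the cubic `f = z_0^2 z_5 - z_0 z_1 z_3 - z_0 z_2 z_4 + (1/3) z_1^3 +
(1/3) z_2^3`, a nonzero point of `K^6` (i.e. a point of `P^5`) lying on the hypersurface
`{f = 0}` has all six partial derivatives of `f` vanishing at it iff `z_0 = z_1 = z_2 = 0`:
the singular locus of the hypersurface is the projective subspace `{z_0 = z_1 = z_2 = 0}`
(which has codimension 2 in the hypersurface). -/
theorem stmt18 (K : Type*) [Field K] [IsAlgClosed K] [CharZero K] :
    let f : MvPolynomial (Fin 6) K :=
      X 0 ^ 2 * X 5 - X 0 * X 1 * X 3 - X 0 * X 2 * X 4 +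
        C (1 / 3 : K) * X 1 ^ 3 + C (1 / 3 : K) * X 2 ^ 3;
    ∀ z : Fin 6 → K, z ≠ 0 → eval z f = 0 →
      ((∀ i : Fin 6, eval z (pderiv i f) = 0) ↔ (z 0 = 0 ∧ z 1 = 0 ∧ z 2 = 0)) := by
  intro f z hz hf
  have e1 : eval z (pderiv 1 f) = -(z 0 * z 3) + z 1 ^ 2 := by
    simp [f, pderiv_mul, pderiv_pow, pderiv_X, Pi.single_apply]; ring
  have e2 : eval z (pderiv 2 f) = -(z 0 * z 4) + z 2 ^ 2 := by
    simp [f, pderiv_mul, pderiv_pow, pderiv_X, Pi.single_apply]; ring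
  have e3 : eval z (pderiv 3 f) = -(z 0 * z 1) := by
    simp [f, pderiv_mul, pderiv_pow, pderiv_X, Pi.single_apply]
  have e4 : eval z (pderiv 4 f) = -(z 0 * z 2) := by
    simp [f, pderiv_mul, pderiv_pow, pderiv_X, Pi.single_apply]
  have e5 : eval z (pderiv 5 f) = z 0 ^ 2 := by
    simp [f, pderiv_mul, pderiv_pow, pderiv_X, Pi.single_apply]
  constructor
  · intro h
    have h5 : z 0 ^ 2 = 0 := by rw [← e5]; exact h 5
    have hz0 : z 0 = 0 := pow_eq_zero_iff (two_ne_zero) |>.mp h5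
    have h1 : -(z 0 * z 3) + z 1 ^ 2 = 0 := by rw [← e1]; exact h 1
    have h2 : -(z 0 * z 4) + z 2 ^ 2 = 0 := by rw [← e2]; exact h 2
    rw [hz0] at h1 h2
    refine ⟨hz0, ?_, ?_⟩
    · have : z 1 ^ 2 = 0 := by linear_combination h1
      exact pow_eq_zero_iff (two_ne_zero) |>.mp this
    · have : z 2 ^ 2 = 0 := by linear_combination h2
      exact pow_eq_zero_iff (two_ne_zero) |>.mp this
  · rintro ⟨h0, h1, h2⟩ i
    fin_cases i
    · simp [f, pderiv_mul, pderiv_pow, pderiv_X, Pi.single_apply, h0, h1, h2]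
    · rw [show ((⟨1, by norm_num⟩ : Fin 6)) = (1 : Fin 6) from rfl, e1, h0, h1]; ring
    · rw [show ((⟨2, by norm_num⟩ : Fin 6)) = (2 : Fin 6) from rfl, e2, h0, h2]; ring
    · rw [show ((⟨3, by norm_num⟩ : Fin 6)) = (3 : Fin 6) from rfl, e3, h0]; ring
    · rw [show ((⟨4, by norm_num⟩ : Fin 6)) = (4 : Fin 6) from rfl, e4, h0]; ring
    · rw [show ((⟨5, by norm_num⟩ : Fin 6)) = (5 : Fin 6) from rfl, e5, h0]; ring
end

section
/- The polynomial f = z_0^4 z_5 - z_0^3 z_1 z_4 - z_0^2 z_2 z_3 + z_0^2 z_1^2 z_3 + z_0^2 z_1 z_2^2 - z_0 z_1^3 z_2 + (1/5) z_1^5 in K[z_0,...,z_5] satisfies: a point of projective 5-space lies in the common zero set of all six partial derivatives of f if and only if z_0 = z_1 = 0; hence the singular locus of the degree-5 hypersurface {f = 0} is the codimension-1 subspace {z_0 = z_1 = 0} of the hypersurface, and the hypersurface is not normal. -/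
open MvPolynomial

/-- For the quintic `f = z_0^4 z_5 - z_0^3 z_1 z_4 - z_0^2 z_2 z_3 +
z_0^2 z_1^2 z_3 + z_0^2 z_1 z_2^2 - z_0 z_1^3 z_2 + (1/5) z_1^5`, a nonzero point of `K^6`
(i.e. a point of `P^5`) lies in the common zero set of all six partial derivatives of `f`
iff `z_0 = z_1 = 0`: the singular locus of the hypersurface `{f = 0}` is the
codimension-1 projective subspace `{z_0 = z_1 = 0}` of the hypersurface (whence the
hypersurface is not normal). -/
theorem stmt19 (K : Type*) [Field K] [IsAlgClosed K] [CharZero K] :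
    let f : MvPolynomial (Fin 6) K :=
      X 0 ^ 4 * X 5 - X 0 ^ 3 * X 1 * X 4 - X 0 ^ 2 * X 2 * X 3 +
        X 0 ^ 2 * X 1 ^ 2 * X 3 + X 0 ^ 2 * X 1 * X 2 ^ 2 - X 0 * X 1 ^ 3 * X 2 +
        C (1 / 5 : K) * X 1 ^ 5;
    ∀ z : Fin 6 → K, z ≠ 0 →
      ((∀ i : Fin 6, eval z (pderiv i f) = 0) ↔ (z 0 = 0 ∧ z 1 = 0)) := by
  intro f z _
  constructor
  · intro h
    have h5 := h 5
    have h1 := h 1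
    simp [f, pderiv_mul, pderiv_pow, pderiv_X, Pi.single_apply] at h5 h1
    refine ⟨h5, ?_⟩
    rw [h5] at h1
    have : z 1 ^ 4 = 0 := by linear_combination h1
    exact pow_eq_zero_iff (by norm_num) |>.mp this
  · rintro ⟨h0, h1⟩ i
    fin_cases i <;>
      simp [f, pderiv_mul, pderiv_pow, pderiv_X, Pi.single_apply, h0, h1]
end
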